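/- arXiv:1909.03439 — 4 statements merged into one kernel-verified Lean document; each statement's English description precedes it below -/
import Mathlib

section
/- Let C ⊂ ℝ² be a compact strictly convex set with nonempty interior and piecewise smooth boundary. For 0 ≤ θ < 2π write Θ = (cos θ, sin θ), and for small δ > 0 let λ(δ,θ) = {t ∈ C : δ + t·Θ = sup_{y∈C} y·Θ} be the chord of C perpendicular to Θ at distance δ from the boundary. Then there exist constants c₁, c₂ > 0, independent of θ, such that for every ρ > c₁ and every θ one has |χ̂_C(ρΘ)| ≤ c₂ ρ⁻¹ ( |λ(ρ⁻¹, θ)| + |λ(ρ⁻¹, θ+π)| ), where |λ| denotes the length (one-dimensional measure) of the segment λ. -/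
open MeasureTheory Real Set Pointwise

/-- Fourier transform of the indicator function of `C ⊆ ℝ²`. -/
noncomputable def ft2 (C : Set (ℝ × ℝ)) (ξ : ℝ × ℝ) : ℂ :=
  ∫ t : ℝ × ℝ, Set.indicator C (fun _ => (1 : ℂ)) t *
    Complex.exp (-(2 * (Real.pi : ℂ) * Complex.I) * ((t.1 * ξ.1 + t.2 * ξ.2 : ℝ) : ℂ))

/-- The supremum of `y ↦ y·Θ` over `C`, where `Θ = (cos θ, sin θ)`. -/
noncomputable def suppFn (C : Set (ℝ × ℝ)) (θ : ℝ) : ℝ :=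
  sSup ((fun y : ℝ × ℝ => y.1 * Real.cos θ + y.2 * Real.sin θ) '' C)

/-- Euclidean length of the chord `λ(δ,θ) = {t ∈ C : δ + t·Θ = sup_{y ∈ C} y·Θ}`:
the line `{t : t·Θ = suppFn C θ - δ}` is parametrized isometrically by
`r ↦ (suppFn C θ - δ)·Θ + r·Θ^⊥`, and we take the Lebesgue measure of the set of
parameters `r` for which the corresponding point lies in `C`. -/
noncomputable def chordLen (C : Set (ℝ × ℝ)) (δ θ : ℝ) : ℝ :=
  (volume {r : ℝ |
    ((suppFn C θ - δ) * Real.cos θ - r * Real.sin θ,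
     (suppFn C θ - δ) * Real.sin θ + r * Real.cos θ) ∈ C}).toReal

lemma pod_onedim (A : ℝ → ℝ) (a b ρ : ℝ) (hρ : 0 < ρ) (hab : a + 2 * ρ⁻¹ ≤ b)
    (hA0 : ∀ s, 0 ≤ A s) (hAa : ∀ s, s ≤ a → A s = 0) (hAb : ∀ s, b ≤ s → A s = 0)
    (hconc : ∀ s₁ ∈ Icc a b, ∀ s₂ ∈ Icc a b, ∀ t ∈ Icc (0:ℝ) 1,
      (1 - t) * A s₁ + t * A s₂ ≤ A ((1 - t) * s₁ + t * s₂))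
    (hIntA : Integrable A) :
    ‖(∫ s : ℝ, (A s : ℂ) *
        Complex.exp (-(2 * (π:ℂ) * Complex.I) * ((ρ * s : ℝ) : ℂ)))‖
      ≤ ρ⁻¹ * (A (a + ρ⁻¹) + A (b - ρ⁻¹)) := by
  have hρ' : (ρ:ℝ) ≠ 0 := ne_of_gt hρ
  set h : ℝ := ρ⁻¹ / 2 with hh_def
  have hh : 0 < h := by positivity
  have h2 : 2 * h = ρ⁻¹ := by rw [hh_def]; ring
  have h4 : a + 4 * h ≤ b := by rw [hh_def]; linarith [hab]
  set e : ℝ → ℂ := fun s => Complex.exp (-(2 * (π:ℂ) * Complex.I) * ((ρ * s : ℝ) : ℂ)) with he_def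
  have he_norm : ∀ s : ℝ, ‖e s‖ = 1 := by
    intro s
    rw [he_def]
    simp only [Complex.norm_exp]
    norm_num [Complex.mul_re]
  have he_shift : ∀ s : ℝ, e (s + h) = - e s := by
    intro s
    have hr : ρ * (s + h) = ρ * s + 1/2 := by
      have : ρ * h = 1/2 := by rw [hh_def]; field_simp
      rw [mul_add, this]
    have hc : ((ρ * (s + h) : ℝ) : ℂ) = ((ρ * s : ℝ) : ℂ) + (1/2 : ℂ) := by
      rw [hr]; push_cast; ring
    rw [he_def]
    simp only
    rw [hc, mul_add, Complex.exp_add]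
    have : Complex.exp (-(2 * (π:ℂ) * Complex.I) * (1/2 : ℂ)) = -1 := by
      have : -(2 * (π:ℂ) * Complex.I) * (1/2 : ℂ) = -(π * Complex.I) := by ring
      rw [this, Complex.exp_neg, Complex.exp_pi_mul_I]
      norm_num
    rw [this]
    ring
  have he_shift2 : ∀ s : ℝ, e (s + 2*h) = e s := by
    intro s
    have : s + 2*h = (s + h) + h := by ring
    rw [this, he_shift, he_shift]; ring
  have he_cont : Continuous e := by
    rw [he_def]; fun_prop
  -- integrability
  have hshift : ∀ d : ℝ, Integrable (fun s => A (s + d)) := by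
    intro d
    exact ((measurePreserving_add_right (volume : Measure ℝ) d).integrable_comp_emb
      (Homeomorph.addRight d).measurableEmbedding).mpr hIntA
  have hprod : ∀ d : ℝ, Integrable (fun s => (A (s + d) : ℂ) * e s) := by
    intro d
    have h1 : Integrable (fun s => e s * (A (s + d) : ℂ)) :=
      Integrable.bdd_mul ((hshift d).ofReal) he_cont.aestronglyMeasurable
        (c := 1) (ae_of_all _ fun s => le_of_eq (he_norm s))
    have : (fun s => (A (s + d) : ℂ) * e s) = fun s => e s * (A (s + d) : ℂ) := by
      funext s; ring
    rw [this]; exact h1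
  have hprod0 : Integrable (fun s => (A s : ℂ) * e s) := by
    have := hprod 0
    simpa using this
  set I : ℂ := ∫ s : ℝ, (A s : ℂ) * e s with hI_def
  -- shifted integrals
  have hshiftI : ∀ d : ℝ, (∫ s : ℝ, (A (s + d) : ℂ) * e (s + d)) = I := by
    intro d
    rw [hI_def]
    exact integral_add_right_eq_self (fun s => (A s : ℂ) * e s) d
  have hI1 : (∫ s : ℝ, (A (s + h) : ℂ) * e s) = - I := by
    have : ∀ s : ℝ, (A (s + h) : ℂ) * e s = -((A (s + h) : ℂ) * e (s + h)) := by
      intro s; rw [he_shift]; ring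
    rw [integral_congr_ae (Filter.Eventually.of_forall this), integral_neg, hshiftI]
  have hI2 : (∫ s : ℝ, (A (s + 2*h) : ℂ) * e s) = I := by
    have : ∀ s : ℝ, (A (s + 2*h) : ℂ) * e s = (A (s + 2*h) : ℂ) * e (s + 2*h) := by
      intro s; rw [he_shift2]
    rw [integral_congr_ae (Filter.Eventually.of_forall this), hshiftI]
  set D : ℝ → ℝ := fun s => A s - 2 * A (s + h) + A (s + 2*h) with hD_def
  have hsubC : Integrable (fun s => (A s : ℂ) * e s - 2 * ((A (s + h) : ℂ) * e s)) := by
    exact hprod0.sub ((hprod h).const_mul 2)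
  have hDceq : (∫ s : ℝ, ((D s : ℝ) : ℂ) * e s) = 4 * I := by
    have hpt : (fun s : ℝ => ((D s : ℝ) : ℂ) * e s)
        = fun s => ((A s : ℂ) * e s - 2 * ((A (s + h) : ℂ) * e s)) + (A (s + 2*h) : ℂ) * e s := by
      funext s; rw [hD_def]; push_cast; ring
    rw [hpt, integral_add hsubC (hprod (2*h)), integral_sub hprod0 ((hprod h).const_mul 2),
      integral_const_mul, hI1, hI2, ← hI_def]
    ring
  have hDint : Integrable D := by
    have hsubR : Integrable (fun s => A s - 2 * A (s + h)) := hIntA.sub ((hshift h).const_mul 2)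
    exact hsubR.add (hshift (2*h))
  -- the absolute value bound
  have habs4 : 4 * ‖I‖ ≤ ∫ s : ℝ, |D s| := by
    have h1 : ‖∫ s : ℝ, ((D s : ℝ) : ℂ) * e s‖ ≤ ∫ s : ℝ, ‖((D s : ℝ) : ℂ) * e s‖ :=
      norm_integral_le_integral_norm _
    have h2 : ∀ s : ℝ, ‖((D s : ℝ) : ℂ) * e s‖ = |D s| := by
      intro s
      rw [norm_mul, he_norm, mul_one, Complex.norm_real, Real.norm_eq_abs]
    rw [integral_congr_ae (Filter.Eventually.of_forall h2), hDceq] at h1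
    calc 4 * ‖I‖ = ‖(4:ℂ) * I‖ := by
          rw [norm_mul]; norm_num
      _ ≤ _ := h1
  -- ∫ D = 0
  have hD0 : (∫ s : ℝ, D s) = 0 := by
    have hsubR : Integrable (fun s => A s - 2 * A (s + h)) := hIntA.sub ((hshift h).const_mul 2)
    have hpt : (fun s : ℝ => D s) = fun s => (A s - 2 * A (s + h)) + A (s + 2*h) := by
      funext s; rw [hD_def]
    rw [hpt, integral_add hsubR (hshift (2*h)), integral_sub hIntA ((hshift h).const_mul 2),
      integral_const_mul]
    have e1 : (∫ s : ℝ, A (s + h)) = ∫ s : ℝ, A s := integral_add_right_eq_self A h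
    have e2 : (∫ s : ℝ, A (s + 2*h)) = ∫ s : ℝ, A s := integral_add_right_eq_self A (2*h)
    rw [e1, e2]; ring
  have hmaxint : Integrable (fun s => max (D s) 0) := hDint.pos_part
  have habs2 : (∫ s : ℝ, |D s|) = 2 * ∫ s : ℝ, max (D s) 0 := by
    have hpt : (fun s : ℝ => |D s|) = fun s => 2 * max (D s) 0 - D s := by
      funext s
      rcases le_total (D s) 0 with hc | hc
      · rw [abs_of_nonpos hc, max_eq_right hc]; ring
      · rw [abs_of_nonneg hc, max_eq_left hc]; ring
    rw [hpt, integral_sub (hmaxint.const_mul 2) hDint, integral_const_mul, hD0]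
    ring
  -- helper concavity bounds near the endpoints
  have helperR : ∀ x, b - 2*h ≤ x → x ≤ b → A x ≤ 2 * A (b - 2*h) := by
    intro x h1 hx2
    have hxa : 0 < x - a := by linarith
    set t : ℝ := (b - 2*h - a) / (x - a) with ht_def
    have ht0 : 0 ≤ t := div_nonneg (by linarith) hxa.le
    have ht1 : t ≤ 1 := by rw [ht_def, div_le_one hxa]; linarith
    have hcomb : (1 - t) * a + t * x = b - 2*h := by
      rw [ht_def]; field_simp; ring
    have hkey := hconc a ⟨le_rfl, by linarith⟩ x ⟨by linarith, hx2⟩ t ⟨ht0, ht1⟩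
    rw [hcomb] at hkey
    have ht : 1/2 ≤ t := by
      rw [ht_def, le_div_iff₀ hxa]; linarith
    nlinarith [hA0 a, hA0 x]
  have helperL : ∀ x, a ≤ x → x ≤ a + 2*h → A x ≤ 2 * A (a + 2*h) := by
    intro x h1 hx2
    have hxb : 0 < b - x := by linarith
    set t : ℝ := (a + 2*h - x) / (b - x) with ht_def
    have ht0 : 0 ≤ t := div_nonneg (by linarith) hxb.le
    have ht1 : t ≤ 1 := by rw [ht_def, div_le_one hxb]; linarith
    have hcomb : (1 - t) * x + t * b = a + 2*h := by
      rw [ht_def]; field_simp; ring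
    have hkey := hconc x ⟨h1, by linarith⟩ b ⟨by linarith, le_rfl⟩ t ⟨ht0, ht1⟩
    rw [hcomb] at hkey
    have ht : t ≤ 1/2 := by
      rw [ht_def, div_le_iff₀ hxb]; linarith
    nlinarith [hA0 b, hA0 x]
  -- the dominating function
  set Phi : ℝ → ℝ := fun s =>
      Set.indicator (Ioo (a - 2*h) a) (fun _ => 2 * A (a + 2*h)) s
      + Set.indicator (Ioo (b - 2*h) b) (fun _ => 2 * A (b - 2*h)) s with hPhi_def
  have hPhi0 : ∀ s, 0 ≤ Phi s := by
    intro s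
    apply add_nonneg
    · exact Set.indicator_nonneg (fun _ _ => by linarith [hA0 (a + 2*h)]) s
    · exact Set.indicator_nonneg (fun _ _ => by linarith [hA0 (b - 2*h)]) s
  have hptw : ∀ s : ℝ, max (D s) 0 ≤ Phi s := by
    intro s
    have hDs : D s = A s - 2 * A (s + h) + A (s + 2*h) := rfl
    by_cases hsb : b ≤ s
    · have : D s = 0 := by
        rw [hDs, hAb s hsb, hAb (s+h) (by linarith), hAb (s+2*h) (by linarith)]; ring
      rw [this]
      simpa using hPhi0 s
    by_cases hsa : s + 2*h ≤ a
    · have : D s = 0 := by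
        rw [hDs, hAa s (by linarith), hAa (s+h) (by linarith), hAa (s+2*h) hsa]; ring
      rw [this]
      simpa using hPhi0 s
    push_neg at hsb hsa
    by_cases h1 : s < a
    · -- left window
      have hD_le : D s ≤ 2 * A (a + 2*h) := by
        have hAs : A s = 0 := hAa s h1.le
        have h5 : A (s + 2*h) ≤ 2 * A (a + 2*h) :=
          helperL (s + 2*h) (by linarith) (by linarith)
        have := hA0 (s + h)
        rw [hDs, hAs]
        linarith
      have hmem : s ∈ Ioo (a - 2*h) a := ⟨by linarith, h1⟩
      have hval : Phi s = 2 * A (a + 2*h)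
          + Set.indicator (Ioo (b - 2*h) b) (fun _ => 2 * A (b - 2*h)) s := by
        rw [hPhi_def]
        simp only [Set.indicator_of_mem hmem]
      have hmax : max (D s) 0 ≤ 2 * A (a + 2*h) :=
        max_le hD_le (by linarith [hA0 (a + 2*h)])
      rw [hval]
      have : (0:ℝ) ≤ Set.indicator (Ioo (b - 2*h) b) (fun _ => 2 * A (b - 2*h)) s :=
        Set.indicator_nonneg (fun _ _ => by linarith [hA0 (b - 2*h)]) s
      linarith
    push_neg at h1
    by_cases h2 : s + 2*h ≤ b
    · -- middle: concavity
      have hkey := hconc s ⟨h1, by linarith⟩ (s + 2*h) ⟨by linarith, h2⟩ (1/2)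
        ⟨by norm_num, by norm_num⟩
      have hmid : (1 - 1/2) * s + (1/2) * (s + 2*h) = s + h := by ring
      rw [hmid] at hkey
      have : D s ≤ 0 := by rw [hDs]; linarith
      calc max (D s) 0 = 0 := max_eq_right this
        _ ≤ Phi s := hPhi0 s
    push_neg at h2
    · -- right window
      have hD_le : D s ≤ 2 * A (b - 2*h) := by
        have hAs2 : A (s + 2*h) = 0 := hAb (s + 2*h) (by linarith)
        have h5 : A s ≤ 2 * A (b - 2*h) := helperR s (by linarith) (by linarith)
        have := hA0 (s + h)
        rw [hDs, hAs2]
        linarith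
      have hmem : s ∈ Ioo (b - 2*h) b := ⟨by linarith, by linarith⟩
      have hval : Phi s = Set.indicator (Ioo (a - 2*h) a) (fun _ => 2 * A (a + 2*h)) s
          + 2 * A (b - 2*h) := by
        rw [hPhi_def]
        simp only [Set.indicator_of_mem hmem]
      have hmax : max (D s) 0 ≤ 2 * A (b - 2*h) :=
        max_le hD_le (by linarith [hA0 (b - 2*h)])
      rw [hval]
      have : (0:ℝ) ≤ Set.indicator (Ioo (a - 2*h) a) (fun _ => 2 * A (a + 2*h)) s :=
        Set.indicator_nonneg (fun _ _ => by linarith [hA0 (a + 2*h)]) s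
      linarith
  -- integrability and integral of Phi
  have hind : ∀ (u v K : ℝ), Integrable (Set.indicator (Ioo u v) (fun _ => K)) := by
    intro u v K
    rw [integrable_indicator_iff measurableSet_Ioo]
    exact integrableOn_const measure_Ioo_lt_top.ne
  have hPhiInt : Integrable Phi := by
    rw [hPhi_def]
    exact (hind (a - 2*h) a (2 * A (a + 2*h))).add (hind (b - 2*h) b (2 * A (b - 2*h)))
  have hPhi_int_eq : (∫ s : ℝ, Phi s) = 2*h * (2 * A (a + 2*h)) + 2*h * (2 * A (b - 2*h)) := by
    rw [hPhi_def]
    rw [integral_add (hind _ _ _) (hind _ _ _)]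
    rw [integral_indicator_const _ measurableSet_Ioo, integral_indicator_const _ measurableSet_Ioo]
    rw [measureReal_def, measureReal_def, Real.volume_Ioo, Real.volume_Ioo]
    have e1 : a - (a - 2*h) = 2*h := by ring
    have e2 : b - (b - 2*h) = 2*h := by ring
    rw [e1, e2, ENNReal.toReal_ofReal (by linarith)]
    simp only [smul_eq_mul]
    try ring
  have hmono : (∫ s : ℝ, max (D s) 0) ≤ ∫ s : ℝ, Phi s :=
    integral_mono hmaxint hPhiInt hptw
  -- conclusion
  have hfin : 4 * ‖I‖ ≤ 8 * h * (A (a + 2*h) + A (b - 2*h)) := by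
    calc 4 * ‖I‖ ≤ ∫ s : ℝ, |D s| := habs4
      _ = 2 * ∫ s : ℝ, max (D s) 0 := habs2
      _ ≤ 2 * ∫ s : ℝ, Phi s := by linarith [hmono]
      _ = 8 * h * (A (a + 2*h) + A (b - 2*h)) := by rw [hPhi_int_eq]; ring
  have hgoal : ‖I‖ ≤ 2 * h * (A (a + 2*h) + A (b - 2*h)) := by linarith
  rw [hI_def] at hgoal
  calc ‖(∫ s : ℝ, (A s : ℂ) * e s)‖ ≤ 2 * h * (A (a + 2*h) + A (b - 2*h)) := hgoal
    _ = ρ⁻¹ * (A (a + ρ⁻¹) + A (b - ρ⁻¹)) := by rw [h2]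

noncomputable def podSlice (C : Set (ℝ × ℝ)) (θ s : ℝ) : Set ℝ :=
  {r : ℝ | (s * Real.cos θ - r * Real.sin θ, s * Real.sin θ + r * Real.cos θ) ∈ C}

noncomputable def podA (C : Set (ℝ × ℝ)) (θ s : ℝ) : ℝ :=
  (volume (podSlice C θ s)).toReal

lemma pod_dot_le (C : Set (ℝ × ℝ)) (hComp : IsCompact C) (θ : ℝ) :
    ∀ p ∈ C, p.1 * Real.cos θ + p.2 * Real.sin θ ≤
      sSup ((fun y : ℝ × ℝ => y.1 * Real.cos θ + y.2 * Real.sin θ) '' C) := by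
  intro p hp
  exact le_csSup ((hComp.image (by fun_prop)).bddAbove) (Set.mem_image_of_mem _ hp)

lemma pod_dot_ge (C : Set (ℝ × ℝ)) (hComp : IsCompact C) (θ : ℝ) :
    ∀ p ∈ C, -sSup ((fun y : ℝ × ℝ =>
        y.1 * Real.cos (θ + π) + y.2 * Real.sin (θ + π)) '' C)
      ≤ p.1 * Real.cos θ + p.2 * Real.sin θ := by
  intro p hp
  have := pod_dot_le C hComp (θ + π) p hp
  simp only [Real.cos_add_pi, Real.sin_add_pi] at this ⊢
  linarith

lemma pod_dot_attained (C : Set (ℝ × ℝ)) (hComp : IsCompact C) (hne : C.Nonempty) (θ : ℝ) :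
    ∃ p ∈ C, p.1 * Real.cos θ + p.2 * Real.sin θ =
      sSup ((fun y : ℝ × ℝ => y.1 * Real.cos θ + y.2 * Real.sin θ) '' C) := by
  have h1 : IsCompact ((fun y : ℝ × ℝ => y.1 * Real.cos θ + y.2 * Real.sin θ) '' C) :=
    hComp.image (by fun_prop)
  have h2 := h1.sSup_mem (hne.image _)
  obtain ⟨p, hp, hp2⟩ := h2
  exact ⟨p, hp, hp2⟩

lemma pod_interior_dot_lt (C : Set (ℝ × ℝ)) (hComp : IsCompact C) (θ : ℝ)
    {z : ℝ × ℝ} (hz : z ∈ interior C) :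
    z.1 * Real.cos θ + z.2 * Real.sin θ <
      sSup ((fun y : ℝ × ℝ => y.1 * Real.cos θ + y.2 * Real.sin θ) '' C) := by
  obtain ⟨ε, hε, hball⟩ := Metric.mem_nhds_iff.1 (mem_interior_iff_mem_nhds.1 hz)
  set q : ℝ × ℝ := (z.1 + ε/2 * Real.cos θ, z.2 + ε/2 * Real.sin θ) with hq_def
  have hqC : q ∈ C := by
    apply hball
    rw [Metric.mem_ball, Prod.dist_eq]
    have d1 : dist q.1 z.1 ≤ ε/2 := by
      rw [Real.dist_eq, hq_def]
      simp only [add_sub_cancel_left]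
      rw [abs_mul]
      calc |ε/2| * |Real.cos θ| ≤ |ε/2| * 1 :=
            mul_le_mul_of_nonneg_left (Real.abs_cos_le_one θ) (abs_nonneg _)
        _ = ε/2 := by rw [mul_one, abs_of_pos (by linarith)]
    have d2 : dist q.2 z.2 ≤ ε/2 := by
      rw [Real.dist_eq, hq_def]
      simp only [add_sub_cancel_left]
      rw [abs_mul]
      calc |ε/2| * |Real.sin θ| ≤ |ε/2| * 1 :=
            mul_le_mul_of_nonneg_left (Real.abs_sin_le_one θ) (abs_nonneg _)
        _ = ε/2 := by rw [mul_one, abs_of_pos (by linarith)]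
    calc max (dist q.1 z.1) (dist q.2 z.2) ≤ ε/2 := max_le d1 d2
      _ < ε := by linarith
  have hdot : q.1 * Real.cos θ + q.2 * Real.sin θ
      = z.1 * Real.cos θ + z.2 * Real.sin θ + ε/2 := by
    rw [hq_def]
    have := Real.sin_sq_add_cos_sq θ
    nlinarith [this]
  have := pod_dot_le C hComp θ q hqC
  rw [hdot] at this
  linarith

lemma pod_pt_dot (θ s r : ℝ) :
    (s * Real.cos θ - r * Real.sin θ) * Real.cos θ
      + (s * Real.sin θ + r * Real.cos θ) * Real.sin θ = s := by
  have h := Real.sin_sq_add_cos_sq θ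
  linear_combination s * h

lemma pod_pt_ne (θ s r₁ r₂ : ℝ) (hne : r₁ ≠ r₂) :
    (s * Real.cos θ - r₁ * Real.sin θ, s * Real.sin θ + r₁ * Real.cos θ)
      ≠ (s * Real.cos θ - r₂ * Real.sin θ, s * Real.sin θ + r₂ * Real.cos θ) := by
  intro heq
  rw [Prod.mk.injEq] at heq
  obtain ⟨h1, h2⟩ := heq
  apply hne
  have h := Real.sin_sq_add_cos_sq θ
  have e1 : (r₁ - r₂) * Real.sin θ = 0 := by linarith
  have e2 : (r₁ - r₂) * Real.cos θ = 0 := by linarith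
  have e3 : (r₁ - r₂)^2 = ((r₁ - r₂) * Real.sin θ)^2 + ((r₁ - r₂) * Real.cos θ)^2 := by
    linear_combination (-(r₁ - r₂)^2) * h
  rw [e1, e2] at e3
  have : (r₁ - r₂)^2 = 0 := by simpa using e3
  have := pow_eq_zero_iff (n := 2) (by norm_num) |>.1 this
  linarith

lemma podA_zero_ge (C : Set (ℝ × ℝ)) (hComp : IsCompact C) (hConv : StrictConvex ℝ C) (θ : ℝ) :
    ∀ s, sSup ((fun y : ℝ × ℝ => y.1 * Real.cos θ + y.2 * Real.sin θ) '' C) ≤ s →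
      podA C θ s = 0 := by
  intro s hs
  have hsub : (podSlice C θ s).Subsingleton := by
    intro r₁ h₁ r₂ h₂
    by_contra hne
    set x : ℝ × ℝ := (s * Real.cos θ - r₁ * Real.sin θ, s * Real.sin θ + r₁ * Real.cos θ)
    set y : ℝ × ℝ := (s * Real.cos θ - r₂ * Real.sin θ, s * Real.sin θ + r₂ * Real.cos θ)
    have hx : x ∈ C := h₁
    have hy : y ∈ C := h₂
    have hxy : x ≠ y := pod_pt_ne θ s r₁ r₂ hne
    have hz := hConv hx hy hxy (by norm_num : (0:ℝ) < 1/2) (by norm_num : (0:ℝ) < 1/2)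
      (by norm_num)
    have hzdot : ((1/2 : ℝ) • x + (1/2 : ℝ) • y).1 * Real.cos θ
        + ((1/2 : ℝ) • x + (1/2 : ℝ) • y).2 * Real.sin θ = s := by
      have d1 := pod_pt_dot θ s r₁
      have d2 := pod_pt_dot θ s r₂
      simp only [Prod.smul_fst, Prod.smul_snd, Prod.fst_add, Prod.snd_add, smul_eq_mul]
      nlinarith [d1, d2]
    have hlt := pod_interior_dot_lt C hComp θ hz
    rw [hzdot] at hlt
    have hdx := pod_dot_le C hComp θ x hx
    have : x.1 * Real.cos θ + x.2 * Real.sin θ = s := pod_pt_dot θ s r₁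
    linarith
  rw [podA, hsub.measure_zero volume]
  simp

lemma podA_zero_le (C : Set (ℝ × ℝ)) (hComp : IsCompact C) (hConv : StrictConvex ℝ C) (θ : ℝ) :
    ∀ s, s ≤ -sSup ((fun y : ℝ × ℝ =>
        y.1 * Real.cos (θ + π) + y.2 * Real.sin (θ + π)) '' C) →
      podA C θ s = 0 := by
  intro s hs
  have hsub : (podSlice C θ s).Subsingleton := by
    intro r₁ h₁ r₂ h₂
    by_contra hne
    set x : ℝ × ℝ := (s * Real.cos θ - r₁ * Real.sin θ, s * Real.sin θ + r₁ * Real.cos θ)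
    set y : ℝ × ℝ := (s * Real.cos θ - r₂ * Real.sin θ, s * Real.sin θ + r₂ * Real.cos θ)
    have hx : x ∈ C := h₁
    have hy : y ∈ C := h₂
    have hxy : x ≠ y := pod_pt_ne θ s r₁ r₂ hne
    have hz := hConv hx hy hxy (by norm_num : (0:ℝ) < 1/2) (by norm_num : (0:ℝ) < 1/2)
      (by norm_num)
    -- dot in direction θ+π of the midpoint is -s
    have hzdot : ((1/2 : ℝ) • x + (1/2 : ℝ) • y).1 * Real.cos (θ + π)
        + ((1/2 : ℝ) • x + (1/2 : ℝ) • y).2 * Real.sin (θ + π) = -s := by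
      have d1 := pod_pt_dot θ s r₁
      have d2 := pod_pt_dot θ s r₂
      simp only [Prod.smul_fst, Prod.smul_snd, Prod.fst_add, Prod.snd_add, smul_eq_mul,
        Real.cos_add_pi, Real.sin_add_pi]
      nlinarith [d1, d2]
    have hlt := pod_interior_dot_lt C hComp (θ + π) hz
    rw [hzdot] at hlt
    -- also the point x has dot_{θ+π} = -s ≤ sSup, so s ≥ a, hence s = a and -s = sSup
    have hdx := pod_dot_le C hComp (θ + π) x hx
    have hxdot : x.1 * Real.cos (θ + π) + x.2 * Real.sin (θ + π) = -s := by
      have d1 := pod_pt_dot θ s r₁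
      simp only [Real.cos_add_pi, Real.sin_add_pi]
      nlinarith [d1]
    rw [hxdot] at hdx
    linarith
  rw [podA, hsub.measure_zero volume]
  simp

lemma pod_slice_closed (C : Set (ℝ × ℝ)) (hC : IsClosed C) (θ s : ℝ) :
    IsClosed (podSlice C θ s) := by
  have : podSlice C θ s = (fun r : ℝ =>
      (s * Real.cos θ - r * Real.sin θ, s * Real.sin θ + r * Real.cos θ)) ⁻¹' C := rfl
  rw [this]
  exact hC.preimage (by fun_prop)

lemma pod_slice_bound (C : Set (ℝ × ℝ)) (hComp : IsCompact C) (θ : ℝ) :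
    ∃ R : ℝ, 0 ≤ R ∧ ∀ s : ℝ, podSlice C θ s ⊆ Icc (-R) R := by
  obtain ⟨M, hM⟩ := isBounded_iff_forall_norm_le.1 hComp.isBounded
  refine ⟨2 * max M 0, by positivity, fun s r hr => ?_⟩
  have hp := hM _ hr
  rw [Prod.norm_def] at hp
  have h1 : |s * Real.cos θ - r * Real.sin θ| ≤ max M 0 :=
    le_max_of_le_left (by simpa [Real.norm_eq_abs] using le_of_max_le_left hp)
  have h2 : |s * Real.sin θ + r * Real.cos θ| ≤ max M 0 :=
    le_max_of_le_left (by simpa [Real.norm_eq_abs] using le_of_max_le_right hp)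
  have hr_eq : r = -(s * Real.cos θ - r * Real.sin θ) * Real.sin θ
      + (s * Real.sin θ + r * Real.cos θ) * Real.cos θ := by
    linear_combination (-r) * Real.sin_sq_add_cos_sq θ
  have habs : |r| ≤ 2 * max M 0 := by
    rw [hr_eq]
    calc |(-(s * Real.cos θ - r * Real.sin θ)) * Real.sin θ
          + (s * Real.sin θ + r * Real.cos θ) * Real.cos θ|
        ≤ |(-(s * Real.cos θ - r * Real.sin θ)) * Real.sin θ|
          + |(s * Real.sin θ + r * Real.cos θ) * Real.cos θ| := abs_add_le _ _
      _ ≤ max M 0 * 1 + max M 0 * 1 := by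
          rw [abs_mul, abs_mul, abs_neg]
          have b1 : |s * Real.cos θ - r * Real.sin θ| * |Real.sin θ| ≤ max M 0 * 1 :=
            mul_le_mul h1 (Real.abs_sin_le_one θ) (abs_nonneg _) (le_max_right M 0)
          have b2 : |s * Real.sin θ + r * Real.cos θ| * |Real.cos θ| ≤ max M 0 * 1 :=
            mul_le_mul h2 (Real.abs_cos_le_one θ) (abs_nonneg _) (le_max_right M 0)
          linarith
      _ = 2 * max M 0 := by ring
  exact abs_le.1 habs

lemma pod_slice_convex (C : Set (ℝ × ℝ)) (hConv : Convex ℝ C) (θ s : ℝ) :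
    Convex ℝ (podSlice C θ s) := by
  intro r₁ hr₁ r₂ hr₂ u v hu hv huv
  have hkey : (s * Real.cos θ - (u * r₁ + v * r₂) * Real.sin θ,
      s * Real.sin θ + (u * r₁ + v * r₂) * Real.cos θ)
      = u • ((s * Real.cos θ - r₁ * Real.sin θ, s * Real.sin θ + r₁ * Real.cos θ) : ℝ × ℝ)
      + v • ((s * Real.cos θ - r₂ * Real.sin θ, s * Real.sin θ + r₂ * Real.cos θ) : ℝ × ℝ) := by
    have h1 : s * Real.cos θ - (u * r₁ + v * r₂) * Real.sin θ
        = u * (s * Real.cos θ - r₁ * Real.sin θ) + v * (s * Real.cos θ - r₂ * Real.sin θ) := by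
      linear_combination (s * Real.cos θ) * huv.symm
    have h2 : s * Real.sin θ + (u * r₁ + v * r₂) * Real.cos θ
        = u * (s * Real.sin θ + r₁ * Real.cos θ) + v * (s * Real.sin θ + r₂ * Real.cos θ) := by
      linear_combination (s * Real.sin θ) * huv.symm
    simp only [Prod.smul_mk, Prod.mk_add_mk, smul_eq_mul]
    exact Prod.ext h1 h2
  have : u • r₁ + v • r₂ = u * r₁ + v * r₂ := rfl
  show (s * Real.cos θ - (u • r₁ + v • r₂) * Real.sin θ,
      s * Real.sin θ + (u • r₁ + v • r₂) * Real.cos θ) ∈ C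
  rw [this, hkey]
  exact hConv hr₁ hr₂ hu hv huv

lemma pod_slice_nonempty (C : Set (ℝ × ℝ)) (hComp : IsCompact C) (hConv : Convex ℝ C)
    (hne : C.Nonempty) (θ : ℝ) :
    ∀ s ∈ Icc (-sSup ((fun y : ℝ × ℝ =>
          y.1 * Real.cos (θ + π) + y.2 * Real.sin (θ + π)) '' C))
        (sSup ((fun y : ℝ × ℝ => y.1 * Real.cos θ + y.2 * Real.sin θ) '' C)),
      (podSlice C θ s).Nonempty := by
  set a := -sSup ((fun y : ℝ × ℝ => y.1 * Real.cos (θ + π) + y.2 * Real.sin (θ + π)) '' C)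
  set b := sSup ((fun y : ℝ × ℝ => y.1 * Real.cos θ + y.2 * Real.sin θ) '' C)
  -- a point of C with any prescribed dot value in [a, b]
  have hmem_of_dot : ∀ p ∈ C, ∀ s : ℝ, p.1 * Real.cos θ + p.2 * Real.sin θ = s →
      (-(p.1) * Real.sin θ + p.2 * Real.cos θ) ∈ podSlice C θ s := by
    intro p hp s hdot
    show (s * Real.cos θ - (-(p.1) * Real.sin θ + p.2 * Real.cos θ) * Real.sin θ,
      s * Real.sin θ + (-(p.1) * Real.sin θ + p.2 * Real.cos θ) * Real.cos θ) ∈ C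
    have e1 : s * Real.cos θ - (-(p.1) * Real.sin θ + p.2 * Real.cos θ) * Real.sin θ = p.1 := by
      linear_combination (-Real.cos θ) * hdot + p.1 * Real.sin_sq_add_cos_sq θ
    have e2 : s * Real.sin θ + (-(p.1) * Real.sin θ + p.2 * Real.cos θ) * Real.cos θ = p.2 := by
      linear_combination (-Real.sin θ) * hdot + p.2 * Real.sin_sq_add_cos_sq θ
    rw [e1, e2]
    exact hp
  intro s hs
  obtain ⟨pb, hpb, hpbd⟩ := pod_dot_attained C hComp hne θ
  obtain ⟨pa, hpa, hpad⟩ := pod_dot_attained C hComp hne (θ + π)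
  have hpad' : pa.1 * Real.cos θ + pa.2 * Real.sin θ = a := by
    have h2 : pa.1 * Real.cos (θ + π) + pa.2 * Real.sin (θ + π)
        = -(pa.1 * Real.cos θ + pa.2 * Real.sin θ) := by
      rw [Real.cos_add_pi, Real.sin_add_pi]; ring
    have h3 : -(pa.1 * Real.cos θ + pa.2 * Real.sin θ)
        = sSup ((fun y : ℝ × ℝ => y.1 * Real.cos (θ + π) + y.2 * Real.sin (θ + π)) '' C) := by
      rw [← h2]; exact hpad
    show pa.1 * Real.cos θ + pa.2 * Real.sin θ
      = -sSup ((fun y : ℝ × ℝ => y.1 * Real.cos (θ + π) + y.2 * Real.sin (θ + π)) '' C)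
    linarith [h3]
  rcases eq_or_lt_of_le (hs.1.trans hs.2) with hab | hab
  · -- a = b, so s = a
    have hsle : s ≤ a := by rw [hab]; exact hs.2
    have hsa : s = a := le_antisymm hsle hs.1
    exact ⟨_, hmem_of_dot pa hpa s (by rw [hpad', hsa])⟩
  · set u := (s - a) / (b - a) with hu_def
    have hba : 0 < b - a := by linarith
    have hu0 : 0 ≤ u := div_nonneg (by linarith [hs.1]) hba.le
    have hu1 : u ≤ 1 := by rw [hu_def, div_le_one hba]; linarith [hs.2]
    set p : ℝ × ℝ := (1 - u) • pa + u • pb with hp_def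
    have hpC : p ∈ C := hConv hpa hpb (by linarith) hu0 (by ring)
    have hpdot : p.1 * Real.cos θ + p.2 * Real.sin θ = s := by
      have hb' : pb.1 * Real.cos θ + pb.2 * Real.sin θ = b := hpbd
      simp only [hp_def, Prod.smul_fst, Prod.smul_snd, Prod.fst_add, Prod.snd_add, smul_eq_mul]
      have : (1 - u) * pa.1 * Real.cos θ + (1-u) * pa.2 * Real.sin θ = (1-u) * a := by
        linear_combination (1 - u) * hpad'
      have hexp : ((1-u) * pa.1 + u * pb.1) * Real.cos θ + ((1-u) * pa.2 + u * pb.2) * Real.sin θ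
          = (1-u) * a + u * b := by
        linear_combination (1 - u) * hpad' + u * hb'
      rw [hexp]
      rw [hu_def]
      field_simp
      ring
    exact ⟨_, hmem_of_dot p hpC s hpdot⟩

lemma pod_slice_facts (C : Set (ℝ × ℝ)) (hComp : IsCompact C) (hConv : Convex ℝ C)
    (θ s : ℝ) (hne : (podSlice C θ s).Nonempty) :
    IsCompact (podSlice C θ s) ∧ sSup (podSlice C θ s) ∈ podSlice C θ s ∧
      sInf (podSlice C θ s) ∈ podSlice C θ s ∧
      podA C θ s = sSup (podSlice C θ s) - sInf (podSlice C θ s) := by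
  obtain ⟨R, hR0, hR⟩ := pod_slice_bound C hComp θ
  have hclosed : IsClosed (podSlice C θ s) := pod_slice_closed C hComp.isClosed θ s
  have hcpt : IsCompact (podSlice C θ s) :=
    IsCompact.of_isClosed_subset isCompact_Icc hclosed (hR s)
  have hgmem : sSup (podSlice C θ s) ∈ podSlice C θ s := hcpt.sSup_mem hne
  have hfmem : sInf (podSlice C θ s) ∈ podSlice C θ s := hcpt.sInf_mem hne
  have hIcc : podSlice C θ s = Icc (sInf (podSlice C θ s)) (sSup (podSlice C θ s)) := by
    apply Set.Subset.antisymm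
    · intro r hr
      exact ⟨csInf_le hcpt.bddBelow hr, le_csSup hcpt.bddAbove hr⟩
    · exact ((pod_slice_convex C hConv θ s).ordConnected).out hfmem hgmem
  have hfg : sInf (podSlice C θ s) ≤ sSup (podSlice C θ s) :=
    csInf_le_csSup hne hcpt.bddBelow hcpt.bddAbove
  refine ⟨hcpt, hgmem, hfmem, ?_⟩
  rw [podA]
  conv_lhs => rw [hIcc]
  rw [Real.volume_Icc, ENNReal.toReal_ofReal (by linarith)]

lemma podA_concave (C : Set (ℝ × ℝ)) (hComp : IsCompact C) (hConv : Convex ℝ C)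
    (hne : C.Nonempty) (θ : ℝ) :
    ∀ s₁ ∈ Icc (-sSup ((fun y : ℝ × ℝ =>
          y.1 * Real.cos (θ + π) + y.2 * Real.sin (θ + π)) '' C))
        (sSup ((fun y : ℝ × ℝ => y.1 * Real.cos θ + y.2 * Real.sin θ) '' C)),
      ∀ s₂ ∈ Icc (-sSup ((fun y : ℝ × ℝ =>
          y.1 * Real.cos (θ + π) + y.2 * Real.sin (θ + π)) '' C))
        (sSup ((fun y : ℝ × ℝ => y.1 * Real.cos θ + y.2 * Real.sin θ) '' C)),
      ∀ t ∈ Icc (0:ℝ) 1,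
        (1 - t) * podA C θ s₁ + t * podA C θ s₂ ≤ podA C θ ((1 - t) * s₁ + t * s₂) := by
  set a := -sSup ((fun y : ℝ × ℝ => y.1 * Real.cos (θ + π) + y.2 * Real.sin (θ + π)) '' C)
    with ha_def
  set b := sSup ((fun y : ℝ × ℝ => y.1 * Real.cos θ + y.2 * Real.sin θ) '' C) with hb_def
  intro s₁ hs₁ s₂ hs₂ t ht
  set s₃ := (1 - t) * s₁ + t * s₂ with hs₃_def
  have hs₃ : s₃ ∈ Icc a b := by
    constructor
    · nlinarith [hs₁.1, hs₂.1, ht.1, ht.2]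
    · nlinarith [hs₁.2, hs₂.2, ht.1, ht.2]
  have h1 := pod_slice_facts C hComp hConv θ s₁ (pod_slice_nonempty C hComp hConv hne θ s₁ hs₁)
  have h2 := pod_slice_facts C hComp hConv θ s₂ (pod_slice_nonempty C hComp hConv hne θ s₂ hs₂)
  have h3 := pod_slice_facts C hComp hConv θ s₃ (pod_slice_nonempty C hComp hConv hne θ s₃ hs₃)
  obtain ⟨hc1, hg1, hf1, hA1⟩ := h1
  obtain ⟨hc2, hg2, hf2, hA2⟩ := h2
  obtain ⟨hc3, hg3, hf3, hA3⟩ := h3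
  set g₁ := sSup (podSlice C θ s₁); set f₁ := sInf (podSlice C θ s₁)
  set g₂ := sSup (podSlice C θ s₂); set f₂ := sInf (podSlice C θ s₂)
  set g₃ := sSup (podSlice C θ s₃); set f₃ := sInf (podSlice C θ s₃)
  -- combination of r-values lies in slice s₃
  have hcomb : ∀ r₁ ∈ podSlice C θ s₁, ∀ r₂ ∈ podSlice C θ s₂,
      ((1 - t) * r₁ + t * r₂) ∈ podSlice C θ s₃ := by
    intro r₁ hr₁ r₂ hr₂
    have hx : (s₁ * Real.cos θ - r₁ * Real.sin θ, s₁ * Real.sin θ + r₁ * Real.cos θ) ∈ C := hr₁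
    have hy : (s₂ * Real.cos θ - r₂ * Real.sin θ, s₂ * Real.sin θ + r₂ * Real.cos θ) ∈ C := hr₂
    have hmem := hConv hx hy (by linarith [ht.2] : (0:ℝ) ≤ 1 - t) ht.1 (by ring)
    have hkey : (1 - t) • ((s₁ * Real.cos θ - r₁ * Real.sin θ,
          s₁ * Real.sin θ + r₁ * Real.cos θ) : ℝ × ℝ)
        + t • ((s₂ * Real.cos θ - r₂ * Real.sin θ, s₂ * Real.sin θ + r₂ * Real.cos θ) : ℝ × ℝ)
        = (s₃ * Real.cos θ - ((1 - t) * r₁ + t * r₂) * Real.sin θ,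
           s₃ * Real.sin θ + ((1 - t) * r₁ + t * r₂) * Real.cos θ) := by
      simp only [Prod.smul_mk, Prod.mk_add_mk, smul_eq_mul]
      rw [hs₃_def]
      exact Prod.ext (by ring) (by ring)
    rw [hkey] at hmem
    exact hmem
  have hgc : (1 - t) * g₁ + t * g₂ ≤ g₃ := le_csSup hc3.bddAbove (hcomb g₁ hg1 g₂ hg2)
  have hfc : f₃ ≤ (1 - t) * f₁ + t * f₂ := csInf_le hc3.bddBelow (hcomb f₁ hf1 f₂ hf2)
  rw [hA1, hA2, hA3]
  nlinarith [ht.1, ht.2]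

lemma podA_nonneg (C : Set (ℝ × ℝ)) (θ s : ℝ) : 0 ≤ podA C θ s := ENNReal.toReal_nonneg

lemma podA_integrable (C : Set (ℝ × ℝ)) (hComp : IsCompact C) (θ a b : ℝ)
    (hza : ∀ s, s ≤ a → podA C θ s = 0) (hzb : ∀ s, b ≤ s → podA C θ s = 0) :
    Integrable (podA C θ) := by
  obtain ⟨R, hR0, hR⟩ := pod_slice_bound C hComp θ
  have hE : MeasurableSet {q : ℝ × ℝ |
      (q.1 * Real.cos θ - q.2 * Real.sin θ, q.1 * Real.sin θ + q.2 * Real.cos θ) ∈ C} := by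
    have : IsClosed {q : ℝ × ℝ |
        (q.1 * Real.cos θ - q.2 * Real.sin θ, q.1 * Real.sin θ + q.2 * Real.cos θ) ∈ C} :=
      hComp.isClosed.preimage (by fun_prop)
    exact this.measurableSet
  have hm : Measurable (podA C θ) := by
    have h1 : Measurable (fun s => volume (podSlice C θ s)) :=
      measurable_measure_prodMk_left (ν := volume) hE
    exact h1.ennreal_toReal
  have hbound : ∀ s, podA C θ s ≤ 2 * R := by
    intro s
    have h1 : volume (podSlice C θ s) ≤ volume (Icc (-R) R) := measure_mono (hR s)
    have h2 : (volume (Icc (-R : ℝ) R)).toReal = 2 * R := by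
      rw [Real.volume_Icc, ENNReal.toReal_ofReal (by linarith)]
      ring
    calc podA C θ s ≤ (volume (Icc (-R : ℝ) R)).toReal :=
          ENNReal.toReal_mono (by rw [Real.volume_Icc]; exact ENNReal.ofReal_ne_top) h1
      _ = 2 * R := h2
  have hgint : Integrable (Set.indicator (Icc a b) (fun _ : ℝ => 2 * R)) := by
    rw [integrable_indicator_iff measurableSet_Icc]
    exact integrableOn_const measure_Icc_lt_top.ne
  apply Integrable.mono' hgint hm.aestronglyMeasurable
  apply ae_of_all
  intro s
  rw [Real.norm_eq_abs, abs_of_nonneg (podA_nonneg C θ s)]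
  by_cases hs : s ∈ Icc a b
  · rw [Set.indicator_of_mem hs]
    exact hbound s
  · rw [Set.indicator_of_notMem hs]
    rw [Set.mem_Icc, not_and_or, not_le, not_le] at hs
    rcases hs with hs | hs
    · rw [hza s hs.le]
    · rw [hzb s hs.le]

lemma pod_chordLen_eq (C : Set (ℝ × ℝ)) (δ θ : ℝ) :
    chordLen C δ θ = podA C θ (suppFn C θ - δ) := rfl

lemma pod_chordLen_pi (C : Set (ℝ × ℝ)) (hComp : IsCompact C) (δ θ : ℝ) :
    chordLen C δ (θ + π) = podA C θ (-suppFn C (θ + π) + δ) := by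
  rw [chordLen, podA]
  congr 1
  have hset : {r : ℝ |
      ((suppFn C (θ + π) - δ) * Real.cos (θ + π) - r * Real.sin (θ + π),
       (suppFn C (θ + π) - δ) * Real.sin (θ + π) + r * Real.cos (θ + π)) ∈ C}
      = (fun r : ℝ => -r) ⁻¹' (podSlice C θ (-suppFn C (θ + π) + δ)) := by
    ext r
    simp only [Set.mem_setOf_eq, Set.mem_preimage, podSlice]
    have hpt : ((suppFn C (θ + π) - δ) * Real.cos (θ + π) - r * Real.sin (θ + π),
        (suppFn C (θ + π) - δ) * Real.sin (θ + π) + r * Real.cos (θ + π))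
        = ((-suppFn C (θ + π) + δ) * Real.cos θ - (-r) * Real.sin θ,
           (-suppFn C (θ + π) + δ) * Real.sin θ + (-r) * Real.cos θ) := by
      rw [Real.cos_add_pi, Real.sin_add_pi]
      exact Prod.ext (by ring) (by ring)
    rw [hpt]
  rw [hset]
  have hmeas : MeasurableSet (podSlice C θ (-suppFn C (θ + π) + δ)) :=
    (pod_slice_closed C hComp.isClosed θ _).measurableSet
  have hneg : (fun r : ℝ => -r) = (Neg.neg : ℝ → ℝ) := rfl
  rw [hneg]
  exact (Measure.measurePreserving_neg (volume : Measure ℝ)).measure_preimage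
    hmeas.nullMeasurableSet

noncomputable def rotL (c s : ℝ) : (ℝ × ℝ) →ₗ[ℝ] (ℝ × ℝ) where
  toFun p := (p.1 * c - p.2 * s, p.1 * s + p.2 * c)
  map_add' p q := by ext <;> simp <;> ring
  map_smul' m p := by ext <;> simp <;> ring

lemma rotL_det (c s : ℝ) (h : c ^ 2 + s ^ 2 = 1) : LinearMap.det (rotL c s) = 1 := by
  rw [← LinearMap.det_toMatrix (Module.Basis.finTwoProd ℝ), Matrix.det_fin_two]
  simp [LinearMap.toMatrix_apply, rotL, Module.Basis.finTwoProd]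
  nlinarith [h]

lemma rotL_mp (c s : ℝ) (h : c ^ 2 + s ^ 2 = 1) :
    MeasurePreserving (rotL c s) (volume : Measure (ℝ × ℝ)) volume := by
  constructor
  · exact (rotL c s).continuous_of_finiteDimensional.measurable
  · have := Measure.map_linearMap_addHaar_eq_smul_addHaar (volume : Measure (ℝ × ℝ))
      (f := rotL c s) (by rw [rotL_det c s h]; norm_num)
    rw [this, rotL_det c s h]
    norm_num

noncomputable def rotH (c s : ℝ) (h : c ^ 2 + s ^ 2 = 1) : (ℝ × ℝ) ≃ₜ (ℝ × ℝ) where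
  toFun p := (p.1 * c - p.2 * s, p.1 * s + p.2 * c)
  invFun p := (p.1 * c + p.2 * s, -(p.1 * s) + p.2 * c)
  left_inv p := by
    ext
    · simp only
      linear_combination p.1 * h
    · simp only
      linear_combination p.2 * h
  right_inv p := by
    ext
    · simp only
      linear_combination p.1 * h
    · simp only
      linear_combination p.2 * h
  continuous_toFun := by fun_prop
  continuous_invFun := by fun_prop

lemma pod_ft2_eq (C : Set (ℝ × ℝ)) (hComp : IsCompact C) (θ ρ : ℝ) :
    ft2 C (ρ * Real.cos θ, ρ * Real.sin θ) =
      ∫ s : ℝ, ((podA C θ s : ℝ) : ℂ) *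
        Complex.exp (-(2 * (π:ℂ) * Complex.I) * ((ρ * s : ℝ) : ℂ)) := by
  have pyth := Real.sin_sq_add_cos_sq θ
  have hpy : Real.cos θ ^ 2 + Real.sin θ ^ 2 = 1 := by linarith
  set f : ℝ × ℝ → ℂ := fun t => Set.indicator C (fun _ => (1:ℂ)) t *
    Complex.exp (-(2 * (π:ℂ) * Complex.I) * ((t.1 * (ρ * Real.cos θ)
      + t.2 * (ρ * Real.sin θ) : ℝ) : ℂ)) with hf_def
  have hCmeas : MeasurableSet C := hComp.isClosed.measurableSet
  have hnorm1 : ∀ x : ℝ, ‖Complex.exp (-(2 * (π:ℂ) * Complex.I) * (x : ℂ))‖ = 1 := by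
    intro x
    rw [Complex.norm_exp]
    norm_num [Complex.mul_re]
  have hind : Integrable (C.indicator (fun _ => (1:ℂ))) := by
    rw [integrable_indicator_iff hCmeas]
    exact integrableOn_const hComp.measure_lt_top.ne
  have hfint : Integrable f := by
    have h1 : Integrable (fun t : ℝ × ℝ =>
        Complex.exp (-(2 * (π:ℂ) * Complex.I) * ((t.1 * (ρ * Real.cos θ)
          + t.2 * (ρ * Real.sin θ) : ℝ) : ℂ)) * C.indicator (fun _ => (1:ℂ)) t) :=
      Integrable.bdd_mul hind
        ((Complex.continuous_exp.comp (continuous_const.mul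
          (Complex.continuous_ofReal.comp (by fun_prop)))).aestronglyMeasurable)
        (c := 1) (ae_of_all _ fun t => le_of_eq (hnorm1 _))
    have : f = fun t : ℝ × ℝ =>
        Complex.exp (-(2 * (π:ℂ) * Complex.I) * ((t.1 * (ρ * Real.cos θ)
          + t.2 * (ρ * Real.sin θ) : ℝ) : ℂ)) * C.indicator (fun _ => (1:ℂ)) t := by
      funext t; rw [hf_def]; ring
    rw [this]
    exact h1
  have mp : MeasurePreserving (⇑(rotH (Real.cos θ) (Real.sin θ) hpy))
      (volume : Measure (ℝ × ℝ)) volume := rotL_mp (Real.cos θ) (Real.sin θ) hpy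
  have emb := (rotH (Real.cos θ) (Real.sin θ) hpy).measurableEmbedding
  have step1 : ft2 C (ρ * Real.cos θ, ρ * Real.sin θ)
      = ∫ p : ℝ × ℝ, f ((rotH (Real.cos θ) (Real.sin θ) hpy) p) := by
    rw [mp.integral_comp emb f]
    rfl
  have hcomp_int : Integrable (fun p : ℝ × ℝ => f ((rotH (Real.cos θ) (Real.sin θ) hpy) p)) :=
    (mp.integrable_comp_emb emb).mpr hfint
  rw [step1]
  rw [show (volume : Measure (ℝ × ℝ)) = (volume : Measure ℝ).prod volume
    from MeasureTheory.Measure.volume_eq_prod ℝ ℝ] at hcomp_int ⊢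
  rw [MeasureTheory.integral_prod _ hcomp_int]
  apply integral_congr_ae
  apply Filter.Eventually.of_forall
  intro s
  have hinner : ∀ r : ℝ, f ((rotH (Real.cos θ) (Real.sin θ) hpy) (s, r))
      = Set.indicator (podSlice C θ s) (fun _ => (1:ℂ)) r
        * Complex.exp (-(2 * (π:ℂ) * Complex.I) * ((ρ * s : ℝ) : ℂ)) := by
    intro r
    have hphase : ((s * Real.cos θ - r * Real.sin θ) * (ρ * Real.cos θ)
        + (s * Real.sin θ + r * Real.cos θ) * (ρ * Real.sin θ) : ℝ) = (ρ * s : ℝ) := by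
      linear_combination (ρ * s) * pyth
    show Set.indicator C (fun _ => (1:ℂ)) (s * Real.cos θ - r * Real.sin θ,
        s * Real.sin θ + r * Real.cos θ) * Complex.exp (-(2 * (π:ℂ) * Complex.I)
          * (((s * Real.cos θ - r * Real.sin θ) * (ρ * Real.cos θ)
            + (s * Real.sin θ + r * Real.cos θ) * (ρ * Real.sin θ) : ℝ) : ℂ)) = _
    rw [hphase]
    rfl
  show (∫ r : ℝ, f ((rotH (Real.cos θ) (Real.sin θ) hpy) (s, r)))
      = (podA C θ s : ℂ) * Complex.exp (-(2 * (π:ℂ) * Complex.I) * ((ρ * s : ℝ) : ℂ))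
  rw [integral_congr_ae (Filter.Eventually.of_forall hinner), integral_mul_const,
    integral_indicator_const (1:ℂ) (pod_slice_closed C hComp.isClosed θ s).measurableSet,
    Complex.real_smul, mul_one]
  rfl

/-- Podkorytov's chord estimate: for a planar strictly convex body with piecewise
smooth boundary, `|χ̂_C(ρΘ)| ≤ c₂ ρ⁻¹ (|λ(ρ⁻¹,θ)| + |λ(ρ⁻¹,θ+π)|)` for `ρ > c₁`,
with constants independent of `θ`. -/
theorem stmt0 (C : Set (ℝ × ℝ))
    (hComp : IsCompact C) (hConv : StrictConvex ℝ C) (hInt : (interior C).Nonempty)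
    (Γ : ℝ → ℝ × ℝ) (L : ℝ) (hL : 0 < L) (hper : Function.Periodic Γ L)
    (hran : Set.range Γ = frontier C) (hcont : Continuous Γ)
    (F : Set ℝ) (hF : F.Finite)
    (hsm : ∀ s : ℝ, Γ s ∉ Γ '' F → ContDiffAt ℝ (⊤ : ℕ∞) Γ s) :
    ∃ c₁ c₂ : ℝ, 0 < c₁ ∧ 0 < c₂ ∧
      ∀ θ ∈ Set.Ico (0 : ℝ) (2 * π), ∀ ρ : ℝ, c₁ < ρ →
        ‖ft2 C (ρ * Real.cos θ, ρ * Real.sin θ)‖ ≤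
          c₂ * ρ⁻¹ * (chordLen C ρ⁻¹ θ + chordLen C ρ⁻¹ (θ + π)) := by
  obtain ⟨x₀, hx₀⟩ := hInt
  obtain ⟨ε, hε, hball⟩ := Metric.mem_nhds_iff.1 (mem_interior_iff_mem_nhds.1 hx₀)
  have hCne : C.Nonempty := ⟨x₀, interior_subset hx₀⟩
  have hwidth : ∀ φ : ℝ, x₀.1 * Real.cos φ + x₀.2 * Real.sin φ + ε/2 ≤ suppFn C φ := by
    intro φ
    set q : ℝ × ℝ := (x₀.1 + ε/2 * Real.cos φ, x₀.2 + ε/2 * Real.sin φ) with hq_def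
    have hqC : q ∈ C := by
      apply hball
      rw [Metric.mem_ball, Prod.dist_eq]
      have d1 : dist q.1 x₀.1 ≤ ε/2 := by
        rw [Real.dist_eq, hq_def]
        simp only [add_sub_cancel_left]
        rw [abs_mul]
        calc |ε/2| * |Real.cos φ| ≤ |ε/2| * 1 :=
              mul_le_mul_of_nonneg_left (Real.abs_cos_le_one φ) (abs_nonneg _)
          _ = ε/2 := by rw [mul_one, abs_of_pos (by linarith)]
      have d2 : dist q.2 x₀.2 ≤ ε/2 := by
        rw [Real.dist_eq, hq_def]
        simp only [add_sub_cancel_left]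
        rw [abs_mul]
        calc |ε/2| * |Real.sin φ| ≤ |ε/2| * 1 :=
              mul_le_mul_of_nonneg_left (Real.abs_sin_le_one φ) (abs_nonneg _)
          _ = ε/2 := by rw [mul_one, abs_of_pos (by linarith)]
      calc max (dist q.1 x₀.1) (dist q.2 x₀.2) ≤ ε/2 := max_le d1 d2
        _ < ε := by linarith
    have hdot : q.1 * Real.cos φ + q.2 * Real.sin φ
        = x₀.1 * Real.cos φ + x₀.2 * Real.sin φ + ε/2 := by
      rw [hq_def]
      have := Real.sin_sq_add_cos_sq φ
      nlinarith [this]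
    have := pod_dot_le C hComp φ q hqC
    rw [hdot] at this
    exact this
  refine ⟨max 1 (4/ε), 1, lt_of_lt_of_le zero_lt_one (le_max_left _ _), one_pos, ?_⟩
  intro θ _ ρ hρ
  have hρ1 : 1 < ρ := lt_of_le_of_lt (le_max_left 1 (4/ε)) hρ
  have hρ0 : 0 < ρ := by linarith
  have hρε : 4/ε < ρ := lt_of_le_of_lt (le_max_right 1 (4/ε)) hρ
  have h4ε : 0 < 4/ε := by positivity
  have hinv : ρ⁻¹ < ε/4 := by
    have h1 : ρ⁻¹ < (4/ε)⁻¹ := by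
      exact inv_strictAnti₀ h4ε hρε
    rwa [inv_div] at h1
  have hab : -suppFn C (θ + π) + 2 * ρ⁻¹ ≤ suppFn C θ := by
    have h1 := hwidth θ
    have h2 := hwidth (θ + π)
    have h3 : x₀.1 * Real.cos (θ + π) + x₀.2 * Real.sin (θ + π)
        = -(x₀.1 * Real.cos θ + x₀.2 * Real.sin θ) := by
      rw [Real.cos_add_pi, Real.sin_add_pi]; ring
    rw [h3] at h2
    linarith
  have hAa : ∀ s, s ≤ -suppFn C (θ + π) → podA C θ s = 0 :=
    podA_zero_le C hComp hConv θ
  have hAb : ∀ s, suppFn C θ ≤ s → podA C θ s = 0 :=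
    podA_zero_ge C hComp hConv θ
  have hconc : ∀ s₁ ∈ Icc (-suppFn C (θ + π)) (suppFn C θ),
      ∀ s₂ ∈ Icc (-suppFn C (θ + π)) (suppFn C θ), ∀ t ∈ Icc (0:ℝ) 1,
      (1 - t) * podA C θ s₁ + t * podA C θ s₂ ≤ podA C θ ((1 - t) * s₁ + t * s₂) :=
    podA_concave C hComp hConv.convex hCne θ
  have hIntA : Integrable (podA C θ) :=
    podA_integrable C hComp θ (-suppFn C (θ + π)) (suppFn C θ) hAa hAb
  have hmain := pod_onedim (podA C θ) (-suppFn C (θ + π)) (suppFn C θ) ρ hρ0 hab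
    (podA_nonneg C θ) hAa hAb hconc hIntA
  calc ‖ft2 C (ρ * Real.cos θ, ρ * Real.sin θ)‖
      = ‖(∫ s : ℝ, ((podA C θ s : ℝ) : ℂ) *
          Complex.exp (-(2 * (π:ℂ) * Complex.I) * ((ρ * s : ℝ) : ℂ)))‖ := by
        rw [pod_ft2_eq C hComp θ ρ]
    _ ≤ ρ⁻¹ * (podA C θ (-suppFn C (θ + π) + ρ⁻¹) + podA C θ (suppFn C θ - ρ⁻¹)) := hmain
    _ = 1 * ρ⁻¹ * (chordLen C ρ⁻¹ θ + chordLen C ρ⁻¹ (θ + π)) := by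
        rw [pod_chordLen_eq C ρ⁻¹ θ, pod_chordLen_pi C hComp ρ⁻¹ θ]
        ring
end

section
/- Let f ∈ C¹([a,b]) be a convex function with f′(x) ≥ λ > 0 for all x ∈ [a,b], and let φ be a continuously differentiable function on [a,b]. Then |∫_a^b e^{2πi f(x)} φ(x) dx| ≤ (1/λ) ( |φ(b)| + ∫_a^b |φ′(x)| dx ). -/
open Real Set MeasureTheory intervalIntegral
open scoped FourierTransform

/-!
Put `F x = ∫_a^x 𝐞(f t) dt`. Integration by parts gives `∫ 𝐞(f) φ = F(b) φ(b) - ∫ F φ'`, so it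
suffices that `‖F x‖ ≤ 1/λ`. The substitution `u = f t` turns `F x` into `∫ g(u) 𝐞(u) du` with
`g = 1/f' ∘ f⁻¹`, which is nonnegative and antitone because convexity makes `f'` monotone.
Since `𝐞(u + 1/2) = -𝐞(u)`, twice this integral equals the integral of `g(u) - g(u + 1/2) ≥ 0`
against `𝐞` plus two half-period end pieces; the three telescope to `2 ∫_{f a}^{f a + 1/2} g`,
whence `‖F x‖ ≤ g(f a)/2 = 1/(2 f'(a)) ≤ 1/λ`.
-/

lemma fourierChar_add_half (u : ℝ) : (𝐞 (u + 1 / 2) : ℂ) = -𝐞 u := by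
  rw [fourierChar_apply, fourierChar_apply, ← neg_one_mul, ← Complex.exp_pi_mul_I,
    ← Complex.exp_add]
  congr 1
  push_cast
  ring

lemma coe_fourierChar_eq_exp (u : ℝ) : (𝐞 u : ℂ) = Complex.exp (2 * π * Complex.I * u) := by
  rw [fourierChar_apply]
  push_cast
  ring_nf

lemma intervalIntegrable_smul_fourierChar {r : ℝ → ℝ} {p q : ℝ}
    (hr : IntervalIntegrable r volume p q) :
    IntervalIntegrable (fun u => r u • (𝐞 u : ℂ)) volume p q :=
  hr.smul_continuousOn (continuous_subtype_val.comp continuous_fourierChar).continuousOn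

lemma norm_integral_smul_fourierChar_le {r : ℝ → ℝ} {p q : ℝ} (hpq : p ≤ q)
    (hr0 : ∀ u, 0 ≤ r u) (hr : IntervalIntegrable r volume p q) :
    ‖∫ u in p..q, r u • (𝐞 u : ℂ)‖ ≤ ∫ u in p..q, r u :=
  norm_integral_le_of_norm_le hpq (ae_of_all _ fun u _ => by
    rw [norm_smul, Circle.norm_coe, mul_one, norm_of_nonneg (hr0 u)]) hr

lemma two_mul_integral_smul_fourierChar {g : ℝ → ℝ}
    (hg : ∀ p q, IntervalIntegrable g volume p q) (c d : ℝ) :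
    2 * ∫ u in c..d, g u • (𝐞 u : ℂ) =
      (∫ u in c..(d - 1 / 2), (g u - g (u + 1 / 2)) • (𝐞 u : ℂ)) +
        (∫ u in (d - 1 / 2)..d, g u • (𝐞 u : ℂ)) -
        ∫ u in (c - 1 / 2)..c, g (u + 1 / 2) • (𝐞 u : ℂ) := by
  have hgs : ∀ p q, IntervalIntegrable (fun u => g (u + 1 / 2)) volume p q := fun p q => by
    simpa using (hg (p + 1 / 2) (q + 1 / 2)).comp_add_right (1 / 2)
  have hshift : ∫ u in c..d, g u • (𝐞 u : ℂ) =
      -∫ u in (c - 1 / 2)..(d - 1 / 2), g (u + 1 / 2) • (𝐞 u : ℂ) := by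
    have := integral_comp_add_right (fun u => g u • (𝐞 u : ℂ)) (1 / 2) (a := c - 1 / 2)
      (b := d - 1 / 2)
    simpa only [sub_add_cancel, fourierChar_add_half, smul_neg, intervalIntegral.integral_neg,
      neg_neg] using this.symm
  rw [two_mul]
  nth_rw 1 [hshift]
  simp only [sub_smul]
  rw [integral_sub (intervalIntegrable_smul_fourierChar (hg _ _))
      (intervalIntegrable_smul_fourierChar (hgs _ _)),
    ← integral_add_adjacent_intervals (intervalIntegrable_smul_fourierChar (hg c (d - 1 / 2)))
      (intervalIntegrable_smul_fourierChar (hg (d - 1 / 2) d)),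
    ← integral_add_adjacent_intervals (intervalIntegrable_smul_fourierChar (hgs (c - 1 / 2) c))
      (intervalIntegrable_smul_fourierChar (hgs c (d - 1 / 2)))]
  ring

theorem norm_integral_smul_fourierChar_le_of_antitone {g : ℝ → ℝ} (hg : Antitone g)
    (hg0 : ∀ u, 0 ≤ g u) {c d : ℝ} (hcd : c ≤ d) :
    ‖∫ u in c..d, g u • (𝐞 u : ℂ)‖ ≤ g c / 2 := by
  have hgi : ∀ p q, IntervalIntegrable g volume p q := fun _ _ => hg.intervalIntegrable
  rcases le_or_gt d (c + 1 / 2) with hdc | hdc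
  · calc _ ≤ g c * |d - c| := norm_integral_le_of_norm_le_const fun u hu => by
            rw [uIoc_of_le hcd] at hu
            rw [norm_smul, Circle.norm_coe, mul_one, norm_of_nonneg (hg0 u)]
            exact hg hu.1.le
      _ ≤ g c / 2 := by rw [abs_of_nonneg (sub_nonneg.2 hcd)]; nlinarith [hg0 c]
  have hgs : Antitone fun u => g (u + 1 / 2) := fun x y hxy => hg (by linarith)
  have hhalf : ∫ u in c..(c + 1 / 2), g u ≤ g c * (1 / 2) := by
    have := integral_mono_on (by linarith) (hgi c (c + 1 / 2)) intervalIntegrable_const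
      (fun u hu => hg hu.1 : ∀ u ∈ Icc c (c + 1 / 2), g u ≤ g c)
    rwa [intervalIntegral.integral_const, smul_eq_mul, add_sub_cancel_left, mul_comm] at this
  have hsum : (∫ u in c..(d - 1 / 2), (g u - g (u + 1 / 2))) + (∫ u in (d - 1 / 2)..d, g u)
      + ∫ u in (c - 1 / 2)..c, g (u + 1 / 2) = 2 * ∫ u in c..(c + 1 / 2), g u := by
    rw [integral_sub (hgi _ _) hgs.intervalIntegrable, integral_comp_add_right,
      integral_comp_add_right, sub_add_cancel, sub_add_cancel]
    have h1 := integral_add_adjacent_intervals (hgi c (d - 1 / 2)) (hgi (d - 1 / 2) d)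
    have h2 := integral_add_adjacent_intervals (hgi c (c + 1 / 2)) (hgi (c + 1 / 2) d)
    linarith
  calc ‖∫ u in c..d, g u • (𝐞 u : ℂ)‖ = ‖2 * ∫ u in c..d, g u • (𝐞 u : ℂ)‖ / 2 := by
        rw [norm_mul, Complex.norm_two]
        ring
    _ ≤ ((∫ u in c..(d - 1 / 2), (g u - g (u + 1 / 2))) + (∫ u in (d - 1 / 2)..d, g u)
          + ∫ u in (c - 1 / 2)..c, g (u + 1 / 2)) / 2 := by
        rw [two_mul_integral_smul_fourierChar hgi]
        gcongr
        refine (norm_sub_le _ _).trans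
          (add_le_add ((norm_add_le _ _).trans (add_le_add ?_ ?_)) ?_)
        · exact norm_integral_smul_fourierChar_le (by linarith)
            (fun u => sub_nonneg.2 (hg (by linarith))) ((hgi _ _).sub hgs.intervalIntegrable)
        · exact norm_integral_smul_fourierChar_le (by linarith) hg0 (hgi _ _)
        · exact norm_integral_smul_fourierChar_le (by linarith) (fun u => hg0 _)
            hgs.intervalIntegrable
    _ ≤ g c / 2 := by rw [hsum]; linarith

theorem norm_integral_smul_fourierChar_le_of_antitoneOn {g : ℝ → ℝ} {c d : ℝ} (hcd : c ≤ d)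
    (hg : AntitoneOn g (Icc c d)) (hg0 : ∀ u ∈ Icc c d, 0 ≤ g u) :
    ‖∫ u in c..d, g u • (𝐞 u : ℂ)‖ ≤ g c / 2 := by
  have hG : Antitone fun u => g (projIcc c d hcd u) := fun x y hxy =>
    hg (projIcc c d hcd x).2 (projIcc c d hcd y).2 (monotone_projIcc hcd hxy)
  have hproj :
      ∫ u in c..d, g u • (𝐞 u : ℂ) = ∫ u in c..d, g (projIcc c d hcd u) • (𝐞 u : ℂ) :=
    integral_congr fun u hu => by
      rw [uIcc_of_le hcd] at hu
      simp only [projIcc_of_mem hcd hu]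
  simpa only [hproj, projIcc_left] using
    norm_integral_smul_fourierChar_le_of_antitone hG (fun u => hg0 _ (projIcc c d hcd u).2) hcd

theorem norm_integral_fourierChar_comp_le_of_monotoneOn_deriv {f f' : ℝ → ℝ} {a b : ℝ}
    (hab : a ≤ b) (hf : ContinuousOn f (Icc a b)) (hff' : ∀ x ∈ Ioo a b, HasDerivAt f (f' x) x)
    (hf'mono : MonotoneOn f' (Icc a b)) (hf'a : 0 < f' a) :
    ‖∫ x in a..b, (𝐞 (f x) : ℂ)‖ ≤ 1 / (2 * f' a) := by
  have hf'pos : ∀ x ∈ Icc a b, 0 < f' x := fun x hx =>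
    hf'a.trans_le (hf'mono (left_mem_Icc.2 hab) hx hx.1)
  have hfmono : StrictMonoOn f (Icc a b) := by
    refine strictMonoOn_of_hasDerivWithinAt_pos (convex_Icc a b) hf (f' := f') ?_ ?_ <;>
      rw [interior_Icc]
    · exact fun x hx => (hff' x hx).hasDerivWithinAt
    · exact fun x hx => hf'pos x (Ioo_subset_Icc_self hx)
  have hfab : f a ≤ f b := hfmono.monotoneOn (left_mem_Icc.2 hab) (right_mem_Icc.2 hab) hab
  -- the monotone change of variables asks nothing of `g`, so the bare `invFunOn` will do
  set finv := Function.invFunOn f (Icc a b)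
  have hfinv : ∀ u ∈ Icc (f a) (f b), finv u ∈ Icc a b ∧ f (finv u) = u := fun u hu =>
    have hu' : ∃ x ∈ Icc a b, f x = u := intermediate_value_Icc hab hf hu
    ⟨Function.invFunOn_mem hu', Function.invFunOn_eq hu'⟩
  set g : ℝ → ℝ := fun u => 1 / f' (finv u)
  have hg : AntitoneOn g (Icc (f a) (f b)) := fun u hu v hv huv => by
    obtain ⟨hu₁, hu₂⟩ := hfinv u hu
    obtain ⟨hv₁, hv₂⟩ := hfinv v hv
    have : finv u ≤ finv v := (hfmono.le_iff_le hu₁ hv₁).1 (by rwa [hu₂, hv₂])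
    exact one_div_le_one_div_of_le (hf'pos _ hu₁) (hf'mono hu₁ hv₁ this)
  have hsubst : ∫ x in a..b, (𝐞 (f x) : ℂ) = ∫ u in f a..f b, g u • (𝐞 u : ℂ) := by
    rw [← integral_deriv_smul_comp_of_deriv_nonneg (by rwa [uIcc_of_le hab])
      (by simpa [hab] using hff')
      (by simpa [hab] using fun x hx => (hf'pos x (Ioo_subset_Icc_self hx)).le)]
    refine integral_congr fun x hx => ?_
    rw [uIcc_of_le hab] at hx
    simp only [Function.comp, g, finv, hfmono.injOn.leftInvOn_invFunOn hx, smul_smul,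
      mul_one_div_cancel (hf'pos x hx).ne', one_smul]
  have hga : g (f a) = 1 / f' a := by
    simp only [g, finv, hfmono.injOn.leftInvOn_invFunOn (left_mem_Icc.2 hab)]
  calc _ ≤ g (f a) / 2 := hsubst ▸ norm_integral_smul_fourierChar_le_of_antitoneOn hfab hg
          fun u hu => (one_div_pos.2 (hf'pos _ (hfinv u hu).1)).le
    _ = 1 / (2 * f' a) := by rw [hga]; ring

lemma DifferentiableOn.hasDerivAt_derivWithin_Icc {F : Type*} [NormedAddCommGroup F]
    [NormedSpace ℝ F] {u : ℝ → F} {a b x : ℝ} (hu : DifferentiableOn ℝ u (Icc a b))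
    (hx : x ∈ Ioo a b) : HasDerivAt u (derivWithin u (Icc a b) x) x :=
  (hu x (Ioo_subset_Icc_self hx)).hasDerivWithinAt.hasDerivAt (Icc_mem_nhds hx.1 hx.2)

theorem norm_integral_smul_le_of_norm_primitive_le {E : Type*} [NormedAddCommGroup E]
    [NormedSpace ℝ E] [CompleteSpace E] {ψ : ℝ → E} {φ φ' : ℝ → ℝ} {a b K : ℝ} (hab : a ≤ b)
    (hψ : ContinuousOn ψ (Icc a b)) (hφ : ContinuousOn φ (Icc a b))
    (hφφ' : ∀ x ∈ Ioo a b, HasDerivAt φ (φ' x) x) (hφ' : IntervalIntegrable φ' volume a b)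
    (hK : ∀ x ∈ Icc a b, ‖∫ t in a..x, ψ t‖ ≤ K) :
    ‖∫ x in a..b, φ x • ψ x‖ ≤ K * (|φ b| + ∫ x in a..b, |φ' x|) := by
  set F : ℝ → E := fun x => ∫ t in a..x, ψ t
  have hψi : IntervalIntegrable ψ volume a b := hψ.intervalIntegrable_of_Icc hab
  have hF : ContinuousOn F (Icc a b) := by
    have := continuousOn_primitive_interval (μ := volume) (f := ψ) (a := a) (b := b)
      (by rw [uIcc_of_le hab]; exact hψ.integrableOn_Icc)
    rwa [uIcc_of_le hab] at this
  have hFψ : ∀ x ∈ Ioo a b, HasDerivAt F (ψ x) x := fun x hx =>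
    integral_hasDerivAt_right (hψi.mono_set (by
        simp [uIcc_of_le hab, uIcc_of_le hx.1.le, Icc_subset_Icc_right hx.2.le]))
      ((hψ.mono Ioo_subset_Icc_self).stronglyMeasurableAtFilter isOpen_Ioo x hx)
      (hψ.continuousAt (Icc_mem_nhds hx.1 hx.2))
  have hibp : ∫ x in a..b, φ x • ψ x = φ b • F b - ∫ x in a..b, φ' x • F x := by
    have := integral_smul_deriv_eq_deriv_smul_of_hasDerivAt (by rwa [uIcc_of_le hab])
      (by rwa [uIcc_of_le hab]) (by simpa [hab] using hφφ') (by simpa [hab] using hFψ) hφ' hψi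
    rwa [show F a = 0 from integral_same, smul_zero, sub_zero] at this
  rw [hibp]
  calc _ ≤ ‖φ b • F b‖ + ‖∫ x in a..b, φ' x • F x‖ := norm_sub_le _ _
    _ ≤ |φ b| * K + ∫ x in a..b, |φ' x| * K := by
        refine add_le_add ?_ (norm_integral_le_of_norm_le hab (ae_of_all _ fun x hx => ?_)
          (hφ'.abs.mul_const K))
        · rw [norm_smul, norm_eq_abs]
          exact mul_le_mul_of_nonneg_left (hK b (right_mem_Icc.2 hab)) (abs_nonneg _)
        · rw [norm_smul, norm_eq_abs]
          exact mul_le_mul_of_nonneg_left (hK x (Ioc_subset_Icc_self hx)) (abs_nonneg _)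
    _ = K * (|φ b| + ∫ x in a..b, |φ' x|) := by rw [intervalIntegral.integral_mul_const]; ring

/-- First-derivative (van der Corput type) estimate: if `f ∈ C¹([a,b])` is convex
with `f' ≥ λ > 0`, and `φ` is continuously differentiable on `[a,b]`, then
`|∫_a^b e^{2πi f(x)} φ(x) dx| ≤ (1/λ)(|φ(b)| + ∫_a^b |φ'(x)| dx)`. -/
theorem stmt3 (a b lam : ℝ) (hab : a < b) (hlam : 0 < lam)
    (f φ : ℝ → ℝ)
    (hf : ContDiffOn ℝ 1 f (Set.Icc a b))
    (hconv : ConvexOn ℝ (Set.Icc a b) f)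
    (hf' : ∀ x ∈ Set.Icc a b, lam ≤ derivWithin f (Set.Icc a b) x)
    (hφ : ContDiffOn ℝ 1 φ (Set.Icc a b)) :
    ‖∫ x in a..b,
        Complex.exp (2 * (π : ℂ) * Complex.I * ((f x : ℝ) : ℂ)) * ((φ x : ℝ) : ℂ)‖ ≤
      (1 / lam) * (|φ b| + ∫ x in a..b, |derivWithin φ (Set.Icc a b) x|) := by
  have hfd := hf.differentiableOn one_ne_zero
  have hf'mono := hconv.monotoneOn_derivWithin hfd
  have hf'a := hf' a (left_mem_Icc.2 hab.le)
  have hprimitive : ∀ x ∈ Icc a b, ‖∫ t in a..x, (𝐞 (f t) : ℂ)‖ ≤ 1 / lam := fun x hx =>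
    calc _ ≤ 1 / (2 * derivWithin f (Icc a b) a) :=
          norm_integral_fourierChar_comp_le_of_monotoneOn_deriv hx.1
            (hf.continuousOn.mono (Icc_subset_Icc_right hx.2))
            (fun t ht => hfd.hasDerivAt_derivWithin_Icc ⟨ht.1, ht.2.trans_le hx.2⟩)
            (hf'mono.mono (Icc_subset_Icc_right hx.2))
            (hlam.trans_le hf'a)
      _ ≤ 1 / lam := by
          gcongr
          linarith
  have key := norm_integral_smul_le_of_norm_primitive_le (ψ := fun t => (𝐞 (f t) : ℂ)) hab.le
    ((continuous_subtype_val.comp continuous_fourierChar).comp_continuousOn hf.continuousOn)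
    hφ.continuousOn (fun _ => (hφ.differentiableOn one_ne_zero).hasDerivAt_derivWithin_Icc)
    ((hφ.continuousOn_derivWithin (uniqueDiffOn_Icc hab) le_rfl).intervalIntegrable_of_Icc
      hab.le)
    hprimitive
  have hintegrand : ∀ x,
      Complex.exp (2 * (π : ℂ) * Complex.I * ((f x : ℝ) : ℂ)) * ((φ x : ℝ) : ℂ) =
        φ x • (𝐞 (f x) : ℂ) := fun x => by
    rw [coe_fourierChar_eq_exp, Complex.real_smul, mul_comm]
  simp_rw [hintegrand]
  exact key
end

section
/- Let γ > 2 and let ε ∈ C¹(ℝ) satisfy ε(x) = 0 for |x| < 1/2 and for |x| ≥ 1. Then there exists a constant c > 0, depending only on γ, ‖ε‖_∞ and ‖ε′‖_∞, such that for all real numbers a, b: |∫_{−∞}^{+∞} e^{−2πi(au + b|u|^γ)} ε(u) du| ≤ c (1 + |(a,b)|)^{−1/2}, where |(a,b)| = √(a² + b²). -/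
/-!
Reflecting `u ↦ -u` reduces the integral to `∫_{1/2}^{1} e^{-2πi(au + bu^γ)} ν(u) du` for two
amplitudes `ν`, and there the phase has derivative `ψ u = a + bγu^{γ-1}`, which is monotone and
expands distances by a factor `≍ |b|`. Integrating by parts against `e^{-2πiφ}` bounds the integral
over any stretch where `|ψ| ≥ ρ` by `M / ρ`. If `|a| ≥ 2γ|b|` then `|ψ| ≥ |a| / 2` throughout;
otherwise `|ψ| < ρ` only on a window of length `≲ ρ / |b|`, estimated trivially, and `ρ ≍ √|b|`
balances the two contributions. Either way the bound is `≲ |(a, b)|^{-1/2}`.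
-/

open Real Set intervalIntegral

theorem integral_abs_deriv_eq_abs_sub {h h' : ℝ → ℝ} {α β : ℝ} (hαβ : α ≤ β)
    (hh : ∀ u ∈ Icc α β, HasDerivAt h (h' u) u) (hh' : ContinuousOn h' (Icc α β))
    (hsign : (∀ u ∈ Icc α β, 0 ≤ h' u) ∨ ∀ u ∈ Icc α β, h' u ≤ 0) :
    ∫ u in α..β, |h' u| = |h β - h α| := by
  suffices key : ∀ {h h' : ℝ → ℝ}, (∀ u ∈ Icc α β, HasDerivAt h (h' u) u) →
      ContinuousOn h' (Icc α β) → (∀ u ∈ Icc α β, 0 ≤ h' u) →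
      ∫ u in α..β, |h' u| = |h β - h α| by
    rcases hsign with hpos | hneg
    · exact key hh hh' hpos
    · simpa [abs_sub_comm, neg_add_eq_sub] using key (h := -h) (h' := -h')
        (fun u hu => (hh u hu).neg) hh'.neg fun u hu => neg_nonneg.2 (hneg u hu)
  intro h h' hh hh' hpos
  have hftc : ∫ u in α..β, h' u = h β - h α :=
    integral_eq_sub_of_hasDerivAt (fun u hu => hh u (uIcc_of_le hαβ ▸ hu))
      (hh'.intervalIntegrable_of_Icc hαβ)
  rw [integral_congr fun u hu => abs_of_nonneg (hpos u (uIcc_of_le hαβ ▸ hu)), hftc,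
    abs_of_nonneg (hftc ▸ integral_nonneg hαβ hpos)]

theorem norm_exp_neg_two_pi_I_mul (t : ℝ) : ‖Complex.exp (-(2 * π * Complex.I) * t)‖ = 1 := by
  simp [Complex.norm_exp]

theorem norm_integral_exp_mul_le {α β : ℝ} {φ ψ g g' : ℝ → ℝ} (hαβ : α ≤ β)
    (hφ : ∀ u ∈ Icc α β, HasDerivAt φ (ψ u) u) (hψ : ContinuousOn ψ (Icc α β))
    (hg : ∀ u ∈ Icc α β, HasDerivAt g (g' u) u) (hg' : ContinuousOn g' (Icc α β)) :
    ‖∫ u in α..β, Complex.exp (-(2 * π * Complex.I) * φ u) * (g u * ψ u : ℝ)‖ ≤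
      (|g α| + |g β| + ∫ u in α..β, |g' u|) / (2 * π) := by
  set c : ℂ := -(2 * π * Complex.I) with hc
  set E : ℝ → ℂ := fun u => Complex.exp (c * φ u)
  have hE : ∀ u ∈ Icc α β, HasDerivAt E (E u * (c * ψ u)) u := fun u hu =>
    ((hφ u hu).ofReal_comp.const_mul c).cexp
  have hEcont : ContinuousOn E (Icc α β) := HasDerivAt.continuousOn hE
  have hEnorm : ∀ u, ‖E u‖ = 1 := fun u => norm_exp_neg_two_pi_I_mul (φ u)
  have hibp := integral_mul_deriv_eq_deriv_mul (u := fun u => (g u : ℂ))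
    (fun u hu => (hg u (uIcc_of_le hαβ ▸ hu)).ofReal_comp) (fun u hu => hE u (uIcc_of_le hαβ ▸ hu))
    ((Complex.continuous_ofReal.comp_continuousOn hg').intervalIntegrable_of_Icc hαβ)
    ((hEcont.mul (continuousOn_const.mul
      (Complex.continuous_ofReal.comp_continuousOn hψ))).intervalIntegrable_of_Icc hαβ)
  have hc0 : c ≠ 0 := by simp [hc, pi_ne_zero]
  have hrewrite : ∫ u in α..β, E u * (g u * ψ u : ℝ) =
      c⁻¹ * ∫ u in α..β, (g u : ℂ) * (E u * (c * ψ u)) := by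
    rw [← integral_const_mul]
    refine integral_congr fun u _ => ?_
    field_simp [hc0]
    push_cast
    ring
  have hrest : ‖∫ u in α..β, (g' u : ℂ) * E u‖ ≤ ∫ u in α..β, |g' u| :=
    (norm_integral_le_integral_norm hαβ).trans_eq
      (integral_congr fun u _ => by simp [hEnorm])
  rw [hrewrite, hibp, norm_mul, norm_inv, hc, norm_neg]
  simp only [norm_mul, Complex.norm_ofNat, Complex.norm_real, Complex.norm_I, mul_one,
    Real.norm_eq_abs, abs_of_pos pi_pos]
  rw [inv_mul_eq_div]
  gcongr
  calc ‖(g β : ℂ) * E β - (g α : ℂ) * E α - ∫ u in α..β, (g' u : ℂ) * E u‖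
      ≤ ‖(g β : ℂ) * E β‖ + ‖(g α : ℂ) * E α‖ + ‖∫ u in α..β, (g' u : ℂ) * E u‖ :=
        (norm_sub_le _ _).trans (by gcongr; exact norm_sub_le _ _)
    _ ≤ |g α| + |g β| + ∫ u in α..β, |g' u| := by
        simp only [norm_mul, hEnorm, Complex.norm_real, Real.norm_eq_abs, mul_one]
        linarith

theorem norm_integral_exp_mul_le_of_le_abs_deriv {α β M ρ : ℝ} {φ ψ ψ' ν : ℝ → ℝ}
    (hαβ : α ≤ β) (hρ : 0 < ρ)
    (hφ : ∀ u ∈ Icc α β, HasDerivAt φ (ψ u) u)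
    (hψ : ∀ u ∈ Icc α β, HasDerivAt ψ (ψ' u) u) (hψ' : ContinuousOn ψ' (Icc α β))
    (hψ'_sign : (∀ u ∈ Icc α β, 0 ≤ ψ' u) ∨ ∀ u ∈ Icc α β, ψ' u ≤ 0)
    (hψρ : ∀ u ∈ Icc α β, ρ ≤ |ψ u|) (hν : ContDiff ℝ 1 ν)
    (hνM : ∀ u ∈ Icc α β, |ν u| ≤ M) (hν'M : ∀ u ∈ Icc α β, |deriv ν u| ≤ M) :
    ‖∫ u in α..β, Complex.exp (-(2 * π * Complex.I) * φ u) * ν u‖ ≤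
      (4 + (β - α)) * M / (2 * π * ρ) := by
  have hM : 0 ≤ M := (abs_nonneg _).trans (hνM α ⟨le_rfl, hαβ⟩)
  have hψ0 : ∀ u ∈ Icc α β, ψ u ≠ 0 := fun u hu h => by
    linarith [hψρ u hu, show |ψ u| = 0 by simp [h]]
  have hψc : ContinuousOn ψ (Icc α β) := HasDerivAt.continuousOn hψ
  have hinv : ∀ u ∈ Icc α β, |(ψ u)⁻¹| ≤ ρ⁻¹ := fun u hu => by
    rw [abs_inv]; exact inv_anti₀ hρ (hψρ u hu)
  -- `1 / ψ` is monotone, so its total variation is at most `2 / ρ`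
  set h' : ℝ → ℝ := fun u => -ψ' u / ψ u ^ 2
  have hh : ∀ u ∈ Icc α β, HasDerivAt (fun u => (ψ u)⁻¹) (h' u) u := fun u hu =>
    (hψ u hu).inv (hψ0 u hu)
  have hh' : ContinuousOn h' (Icc α β) :=
    hψ'.neg.div (hψc.pow 2) fun u hu => pow_ne_zero 2 (hψ0 u hu)
  have hvar : ∫ u in α..β, |h' u| ≤ 2 * ρ⁻¹ := by
    rw [integral_abs_deriv_eq_abs_sub hαβ hh hh' (hψ'_sign.symm.imp
      (fun h u hu => div_nonneg (neg_nonneg.2 (h u hu)) (sq_nonneg _))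
      (fun h u hu => div_nonpos_of_nonpos_of_nonneg (neg_nonpos.2 (h u hu)) (sq_nonneg _)))]
    linarith [abs_sub (ψ β)⁻¹ (ψ α)⁻¹, hinv α ⟨le_rfl, hαβ⟩, hinv β ⟨hαβ, le_rfl⟩]
  set g : ℝ → ℝ := fun u => ν u * (ψ u)⁻¹
  set g' : ℝ → ℝ := fun u => deriv ν u * (ψ u)⁻¹ + ν u * h' u
  have hg : ∀ u ∈ Icc α β, HasDerivAt g (g' u) u := fun u hu =>
    ((hν.differentiable one_ne_zero u).hasDerivAt).mul (hh u hu)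
  have hg' : ContinuousOn g' (Icc α β) :=
    ((hν.continuous_deriv le_rfl).continuousOn.mul (hψc.inv₀ hψ0)).add
      (hν.continuous.continuousOn.mul hh')
  have hgM : ∀ u ∈ Icc α β, |g u| ≤ M * ρ⁻¹ := fun u hu => by
    rw [abs_mul]; exact mul_le_mul (hνM u hu) (hinv u hu) (abs_nonneg _) hM
  have hg'M : ∫ u in α..β, |g' u| ≤ (β - α + 2) * (M * ρ⁻¹) := by
    calc ∫ u in α..β, |g' u| ≤ ∫ u in α..β, (M * ρ⁻¹ + M * |h' u|) := by
          refine integral_mono_on hαβ (hg'.abs.intervalIntegrable_of_Icc hαβ)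
            ((continuousOn_const.add (continuousOn_const.mul hh'.abs)).intervalIntegrable_of_Icc
              hαβ) fun u hu => ?_
          refine (abs_add_le _ _).trans (add_le_add ?_ ?_) <;> rw [abs_mul]
          · exact mul_le_mul (hν'M u hu) (hinv u hu) (abs_nonneg _) hM
          · exact mul_le_mul_of_nonneg_right (hνM u hu) (abs_nonneg _)
      _ = (β - α) * (M * ρ⁻¹) + M * ∫ u in α..β, |h' u| := by
          rw [integral_add intervalIntegrable_const
            ((hh'.abs.intervalIntegrable_of_Icc hαβ).const_mul M),
            integral_const, integral_const_mul, smul_eq_mul]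
      _ ≤ (β - α + 2) * (M * ρ⁻¹) := by nlinarith
  have hνg : ∀ u ∈ uIcc α β, Complex.exp (-(2 * π * Complex.I) * φ u) * ν u =
      Complex.exp (-(2 * π * Complex.I) * φ u) * (g u * ψ u : ℝ) := fun u hu => by
    rw [inv_mul_cancel_right₀ (hψ0 u (uIcc_of_le hαβ ▸ hu))]
  rw [integral_congr hνg]
  refine (norm_integral_exp_mul_le hαβ hφ hψc hg hg').trans ?_
  calc (|g α| + |g β| + ∫ u in α..β, |g' u|) / (2 * π)
      ≤ (M * ρ⁻¹ + M * ρ⁻¹ + (β - α + 2) * (M * ρ⁻¹)) / (2 * π) := by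
        gcongr
        exacts [hgM α ⟨le_rfl, hαβ⟩, hgM β ⟨hαβ, le_rfl⟩]
    _ = (4 + (β - α)) * M / (2 * π * ρ) := by field_simp; ring

theorem norm_integral_le_of_expanding {E : Type*} [NormedAddCommGroup E] [NormedSpace ℝ E]
    {F : ℝ → E} {ψ : ℝ → ℝ} {α β M ρ κ B : ℝ} (hαβ : α ≤ β) (hρ : 0 ≤ ρ) (hκ : 0 < κ)
    (hB : 0 ≤ B) (hF : ContinuousOn F (Icc α β)) (hFM : ∀ u ∈ Icc α β, ‖F u‖ ≤ M)
    (hψ : ∀ u ∈ Icc α β, ∀ v ∈ Icc α β, κ * |u - v| ≤ |ψ u - ψ v|)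
    (hFB : ∀ p q, α ≤ p → p ≤ q → q ≤ β → (∀ u ∈ Icc p q, ρ ≤ |ψ u|) →
      ‖∫ u in p..q, F u‖ ≤ B) :
    ‖∫ u in α..β, F u‖ ≤ 2 * B + 4 * M * ρ / κ := by
  have hM : 0 ≤ M := (norm_nonneg _).trans (hFM α ⟨le_rfl, hαβ⟩)
  by_cases hstat : ∀ u ∈ Icc α β, ρ ≤ |ψ u|
  · have := hFB α β le_rfl hαβ le_rfl hstat
    have : 0 ≤ 4 * M * ρ / κ := by positivity
    linarith
  push Not at hstat
  obtain ⟨u₀, hu₀, hψu₀⟩ := hstat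
  -- outside `[u₀ - δ, u₀ + δ]` expansion gives `|ψ| ≥ κ δ - |ψ u₀| ≥ ρ`
  set δ := 2 * ρ / κ with hδ
  have hκδ : κ * δ = 2 * ρ := by rw [hδ]; field_simp
  have hδ0 : 0 ≤ δ := by positivity
  have hfar : ∀ u ∈ Icc α β, δ ≤ |u - u₀| → ρ ≤ |ψ u| := fun u hu hu₀δ => by
    have := mul_le_mul_of_nonneg_left hu₀δ hκ.le
    linarith [hψ u hu u₀ hu₀, abs_sub (ψ u) (ψ u₀)]
  set p := max α (u₀ - δ)
  set q := min β (u₀ + δ)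
  have hp : p ∈ Icc α β := ⟨le_max_left _ _, max_le hαβ (by linarith [hu₀.2])⟩
  have hq : q ∈ Icc α β := ⟨le_min hαβ (by linarith [hu₀.1]), min_le_left _ _⟩
  have hpq : p ≤ q := (max_le hu₀.1 (by linarith)).trans (le_min hu₀.2 (by linarith))
  have hint : ∀ {x y}, x ∈ Icc α β → y ∈ Icc α β → IntervalIntegrable F MeasureTheory.volume x y :=
    fun hx hy => (hF.mono (uIcc_subset_Icc hx hy)).intervalIntegrable
  have hleft : ‖∫ u in α..p, F u‖ ≤ B := by
    rcases le_or_gt (u₀ - δ) α with h | h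
    · rw [show p = α from max_eq_left h, integral_same, norm_zero]; exact hB
    · refine hFB α p le_rfl hp.1 hp.2 fun u hu => hfar u ⟨hu.1, hu.2.trans hp.2⟩ ?_
      rw [abs_sub_comm, abs_of_nonneg] <;> linarith [hu.2, max_eq_right h.le]
  have hright : ‖∫ u in q..β, F u‖ ≤ B := by
    rcases le_or_gt β (u₀ + δ) with h | h
    · rw [show q = β from min_eq_left h, integral_same, norm_zero]; exact hB
    · refine hFB q β hq.1 hq.2 le_rfl fun u hu => hfar u ⟨hq.1.trans hu.1, hu.2⟩ ?_
      rw [abs_of_nonneg] <;> linarith [hu.1, min_eq_right h.le]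
  have hmiddle : ‖∫ u in p..q, F u‖ ≤ 4 * M * ρ / κ := by
    refine (norm_integral_le_of_norm_le_const fun u hu => hFM u ?_).trans ?_
    · rw [uIoc_of_le hpq] at hu
      exact ⟨hp.1.trans hu.1.le, hu.2.trans hq.2⟩
    · rw [abs_of_nonneg (sub_nonneg.2 hpq)]
      calc M * (q - p) ≤ M * (2 * δ) := by
            gcongr; linarith [le_max_right α (u₀ - δ), min_le_right β (u₀ + δ)]
        _ = 4 * M * ρ / κ := by rw [hδ]; ring
  rw [← integral_add_adjacent_intervals (hint ⟨le_rfl, hαβ⟩ hp) (hint hp ⟨hαβ, le_rfl⟩),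
    ← integral_add_adjacent_intervals (hint hp hq) (hint hq ⟨hαβ, le_rfl⟩)]
  calc ‖(∫ u in α..p, F u) + ((∫ u in p..q, F u) + ∫ u in q..β, F u)‖
      ≤ ‖∫ u in α..p, F u‖ + (‖∫ u in p..q, F u‖ + ‖∫ u in q..β, F u‖) :=
        (norm_add_le _ _).trans (by gcongr; exact norm_add_le _ _)
    _ ≤ 2 * B + 4 * M * ρ / κ := by linarith

theorem integral_eq_intervalIntegral_add_intervalIntegral_comp_neg {E : Type*}
    [NormedAddCommGroup E] [NormedSpace ℝ E] {f : ℝ → E} {α β : ℝ} (hα : 0 ≤ α) (hαβ : α ≤ β)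
    (hf : Continuous f) (hsmall : ∀ x, |x| < α → f x = 0) (hlarge : ∀ x, β ≤ |x| → f x = 0) :
    ∫ x, f x = (∫ x in α..β, f x) + ∫ x in α..β, f (-x) := by
  have hout : ∫ x, f x = ∫ x in -β..β, f x := by
    rw [integral_of_le (by linarith), MeasureTheory.setIntegral_eq_integral_of_forall_compl_eq_zero]
    intro x hx
    refine hlarge x ?_
    rw [mem_Ioc, not_and_or, not_lt, not_le] at hx
    rcases hx with hx | hx
    · rw [abs_of_nonpos (by linarith)]; linarith
    · rw [abs_of_pos (by linarith)]; exact hx.le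
  have hin : ∫ x in -α..α, f x = 0 := by
    rw [integral_of_le (by linarith), MeasureTheory.integral_Ioc_eq_integral_Ioo]
    exact MeasureTheory.setIntegral_eq_zero_of_forall_eq_zero fun x hx =>
      hsmall x (abs_lt.2 hx)
  rw [hout, integral_comp_neg, ← integral_add_adjacent_intervals (b := -α)
    (hf.intervalIntegrable _ _) (hf.intervalIntegrable _ _), ← integral_add_adjacent_intervals
    (a := -α) (b := α) (hf.intervalIntegrable _ _) (hf.intervalIntegrable _ _), hin, zero_add,
    add_comm]

theorem mul_rpow_mul_sub_le_rpow_sub_rpow {p s u v : ℝ} (hp : 1 ≤ p) (hs : 0 < s) (hsv : s ≤ v)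
    (hvu : v ≤ u) : p * s ^ (p - 1) * (u - v) ≤ u ^ p - v ^ p := by
  refine (convex_Ici s).mul_sub_le_image_sub_of_le_deriv
    (Real.continuous_rpow_const (by linarith)).continuousOn
    (fun x hx => (Real.differentiableAt_rpow_const_of_ne p ?_).differentiableWithinAt)
    (fun x hx => ?_) v hsv u (hsv.trans hvu) hvu
  · rw [interior_Ici] at hx; exact (hs.trans hx).ne'
  · rw [interior_Ici] at hx
    rw [Real.deriv_rpow_const]
    gcongr
    exact hx.le

theorem hasDerivAt_phase (a b γ : ℝ) {u : ℝ} (hu : 0 < u) :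
    HasDerivAt (fun u => a * u + b * u ^ γ) (a + b * γ * u ^ (γ - 1)) u := by
  refine (((hasDerivAt_id u).const_mul a).add
    ((Real.hasDerivAt_rpow_const (p := γ) (Or.inl hu.ne')).const_mul b)).congr_deriv ?_
  ring

theorem hasDerivAt_phase_deriv (a b γ : ℝ) {u : ℝ} (hu : 0 < u) :
    HasDerivAt (fun u => a + b * γ * u ^ (γ - 1)) (b * γ * (γ - 1) * u ^ (γ - 2)) u := by
  refine (((Real.hasDerivAt_rpow_const (p := γ - 1) (Or.inl hu.ne')).const_mul
    (b * γ)).const_add a).congr_deriv ?_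
  rw [show γ - 1 - 1 = γ - 2 by ring]; ring

theorem mul_abs_sub_le_abs_phase_deriv_sub (a b : ℝ) {γ s u v : ℝ} (hγ : 2 ≤ γ) (hs : 0 < s)
    (hu : s ≤ u) (hv : s ≤ v) :
    γ * (γ - 1) * s ^ (γ - 2) * |b| * |u - v| ≤
      |(a + b * γ * u ^ (γ - 1)) - (a + b * γ * v ^ (γ - 1))| := by
  wlog hvu : v ≤ u generalizing u v
  · rw [abs_sub_comm u, abs_sub_comm (a + _)]
    exact this hv hu (le_of_not_ge hvu)
  have hpow := mul_rpow_mul_sub_le_rpow_sub_rpow (p := γ - 1) (by linarith) hs hv hvu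
  rw [show γ - 1 - 1 = γ - 2 by ring] at hpow
  rw [show a + b * γ * u ^ (γ - 1) - (a + b * γ * v ^ (γ - 1)) =
      b * γ * (u ^ (γ - 1) - v ^ (γ - 1)) by ring, abs_mul, abs_mul,
    abs_of_pos (by linarith : 0 < γ), abs_of_nonneg (sub_nonneg.2 hvu),
    abs_of_nonneg ((mul_nonneg (mul_nonneg (by linarith) (rpow_nonneg hs.le _))
      (sub_nonneg.2 hvu)).trans hpow)]
  calc γ * (γ - 1) * s ^ (γ - 2) * |b| * (u - v)
      = |b| * γ * ((γ - 1) * s ^ (γ - 2) * (u - v)) := by ring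
    _ ≤ |b| * γ * (u ^ (γ - 1) - v ^ (γ - 1)) := by gcongr

theorem norm_integral_phase_le {γ a b M ρ p q : ℝ} {ν : ℝ → ℝ} (hp : 0 < p) (hpq : p ≤ q)
    (hqp : q - p ≤ 1) (hρ : 0 < ρ) (hψρ : ∀ u ∈ Icc p q, ρ ≤ |a + b * γ * u ^ (γ - 1)|)
    (hν : ContDiff ℝ 1 ν) (hνM : ∀ u, |ν u| ≤ M) (hν'M : ∀ u, |deriv ν u| ≤ M) :
    ‖∫ u in p..q, Complex.exp (-(2 * π * Complex.I) * (a * u + b * u ^ γ : ℝ)) * ν u‖ ≤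
      M / ρ := by
  have hM : 0 ≤ M := (abs_nonneg _).trans (hνM p)
  have hu : ∀ u ∈ Icc p q, 0 < u := fun u hu' => hp.trans_le hu'.1
  have hsign : (∀ u ∈ Icc p q, 0 ≤ b * γ * (γ - 1) * u ^ (γ - 2)) ∨
      ∀ u ∈ Icc p q, b * γ * (γ - 1) * u ^ (γ - 2) ≤ 0 :=
    (le_total 0 (b * γ * (γ - 1))).imp
      (fun h u hu' => mul_nonneg h (rpow_nonneg (hu u hu').le _))
      (fun h u hu' => mul_nonpos_of_nonpos_of_nonneg h (rpow_nonneg (hu u hu').le _))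
  refine (norm_integral_exp_mul_le_of_le_abs_deriv hpq hρ
    (fun u hu' => hasDerivAt_phase a b γ (hu u hu'))
    (fun u hu' => hasDerivAt_phase_deriv a b γ (hu u hu'))
    (continuousOn_const.mul (continuousOn_id.rpow_const fun u hu' => Or.inl (hu u hu').ne'))
    hsign hψρ hν (fun u _ => hνM u) (fun u _ => hν'M u)).trans ?_
  rw [div_le_div_iff₀ (by positivity) hρ]
  nlinarith [mul_nonneg hM hρ.le, pi_gt_three]

/-- `ρ := √(phaseConst γ · |(a, b)|)` must stay below `|a| / 2` when `|a| ≥ 2γ|b|`; otherwise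
`ρ² ≤ κ := γ(γ-1)(1/2)^{γ-2}|b|` is needed, so that the window of length `4ρ / κ` around a zero
of `ψ` costs at most `4M / ρ`. -/
noncomputable def phaseConst (γ : ℝ) : ℝ :=
  min (1 / 16) (γ * (γ - 1) * (1 / 2) ^ (γ - 2) / (2 * γ + 1))

theorem phaseConst_pos {γ : ℝ} (hγ : 1 < γ) : 0 < phaseConst γ := by
  have : 0 < γ - 1 := by linarith
  exact lt_min (by norm_num) (by positivity)

theorem norm_integral_half_one_le_of_one_le {γ a b M : ℝ} {ν : ℝ → ℝ} (hγ : 2 ≤ γ)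
    (hν : ContDiff ℝ 1 ν) (hνM : ∀ u, |ν u| ≤ M) (hν'M : ∀ u, |deriv ν u| ≤ M)
    (hr : 1 ≤ √(a ^ 2 + b ^ 2)) :
    ‖∫ u in (1 / 2 : ℝ)..1,
        Complex.exp (-(2 * π * Complex.I) * (a * u + b * u ^ γ : ℝ)) * ν u‖ ≤
      6 * M / √(phaseConst γ * √(a ^ 2 + b ^ 2)) := by
  set r := √(a ^ 2 + b ^ 2)
  set κ₀ := γ * (γ - 1) * (1 / 2) ^ (γ - 2)
  set k := phaseConst γ
  set ρ := √(k * r)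
  have hM : 0 ≤ M := (abs_nonneg _).trans (hνM 0)
  have hγ0 : 0 < γ := by linarith
  have hκ₀ : 0 < κ₀ := by
    have : 0 < γ - 1 := by linarith
    positivity
  have hk : 0 < k := phaseConst_pos (by linarith)
  have hρ : 0 < ρ := by positivity
  have hρsq : ρ ^ 2 = k * r := sq_sqrt (by positivity)
  have hrab : r ≤ |a| + |b| := sqrt_le_iff.2 ⟨by positivity, by
    nlinarith [sq_abs a, sq_abs b, mul_nonneg (abs_nonneg a) (abs_nonneg b)]⟩
  rcases le_or_gt (2 * γ * |b|) |a| with hab | hab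
  · -- `ψ` stays away from zero: `|ψ| ≥ |a| / 2 ≥ r / 4 ≥ ρ`
    have hρr : ρ ≤ r / 4 := by
      have : k ≤ 1 / 16 := min_le_left _ _
      nlinarith
    refine (norm_integral_phase_le (by norm_num) (by norm_num) (by norm_num) hρ
      (fun u hu => ?_) hν hνM hν'M).trans (by gcongr; linarith)
    have hu1 : u ^ (γ - 1) ≤ 1 := rpow_le_one (by linarith [hu.1]) hu.2 (by linarith)
    have hu0 : 0 ≤ u ^ (γ - 1) := rpow_nonneg (by linarith [hu.1]) _
    have hbu : |b * γ * u ^ (γ - 1)| ≤ |b| * γ := by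
      rw [abs_mul, abs_mul, abs_of_pos hγ0, abs_of_nonneg hu0]
      exact mul_le_of_le_one_right (by positivity) hu1
    have htri : |a| ≤ |a + b * γ * u ^ (γ - 1)| + |b * γ * u ^ (γ - 1)| := by
      simpa using abs_sub (a + b * γ * u ^ (γ - 1)) (b * γ * u ^ (γ - 1))
    nlinarith [abs_nonneg b]
  · -- near a zero of `ψ` the integral is split at scale `ρ / κ`
    have hb : 0 < |b| :=
      pos_of_mul_pos_right ((abs_nonneg a).trans_lt hab) (by positivity)
    have hρκ : ρ ^ 2 ≤ κ₀ * |b| := by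
      have hk' : k ≤ κ₀ / (2 * γ + 1) := min_le_right _ _
      have hrb : r ≤ (2 * γ + 1) * |b| := by nlinarith [abs_nonneg b]
      rw [hρsq]
      calc k * r ≤ κ₀ / (2 * γ + 1) * ((2 * γ + 1) * |b|) := by gcongr
        _ = κ₀ * |b| := by field_simp
    refine (norm_integral_le_of_expanding (ψ := fun u => a + b * γ * u ^ (γ - 1))
      (M := M) (κ := κ₀ * |b|) (B := M / ρ) (by norm_num) hρ.le (by positivity) (by positivity)
      ?_ (fun u _ => ?_) (fun u hu v hv => ?_) (fun p q hp hpq hq h => ?_)).trans ?_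
    · have := hν.continuous
      have := Real.continuous_rpow_const (q := γ) (by linarith)
      fun_prop
    · rw [norm_mul, norm_exp_neg_two_pi_I_mul, one_mul, Complex.norm_real]
      exact hνM u
    · exact mul_abs_sub_le_abs_phase_deriv_sub a b hγ (by norm_num) hu.1 hv.1
    · exact norm_integral_phase_le (by linarith) hpq (by linarith) hρ h hν hνM hν'M
    · have : ρ / (κ₀ * |b|) ≤ 1 / ρ := by
        rw [div_le_div_iff₀ (by positivity) hρ]; nlinarith
      calc 2 * (M / ρ) + 4 * M * ρ / (κ₀ * |b|) = 2 * (M / ρ) + 4 * M * (ρ / (κ₀ * |b|)) := by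
            ring
        _ ≤ 2 * (M / ρ) + 4 * M * (1 / ρ) := by gcongr
        _ = 6 * M / ρ := by ring

theorem norm_integral_half_one_le {γ a b M : ℝ} {ν : ℝ → ℝ} (hγ : 2 ≤ γ)
    (hν : ContDiff ℝ 1 ν) (hνM : ∀ u, |ν u| ≤ M) (hν'M : ∀ u, |deriv ν u| ≤ M) :
    ‖∫ u in (1 / 2 : ℝ)..1,
        Complex.exp (-(2 * π * Complex.I) * (a * u + b * u ^ γ : ℝ)) * ν u‖ ≤
      M * (1 + 6 * √(2 / phaseConst γ)) * (1 + √(a ^ 2 + b ^ 2)) ^ (-(1 / 2) : ℝ) := by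
  set r := √(a ^ 2 + b ^ 2)
  set k := phaseConst γ
  have hM : 0 ≤ M := (abs_nonneg _).trans (hνM 0)
  have hk : 0 < k := phaseConst_pos (by linarith)
  rw [rpow_neg (by positivity), ← sqrt_eq_rpow, ← div_eq_mul_inv]
  rcases le_or_gt r 1 with hr1 | hr1
  · calc _ ≤ M * |1 - 1 / 2| := norm_integral_le_of_norm_le_const fun u _ => by
            rw [norm_mul, norm_exp_neg_two_pi_I_mul, one_mul, Complex.norm_real]
            exact hνM u
      _ = M / 2 := by norm_num [abs_of_pos]; ring
      _ ≤ M * (1 + 6 * √(2 / k)) / 2 := by gcongr; nlinarith [sqrt_nonneg (2 / k)]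
      _ ≤ M * (1 + 6 * √(2 / k)) / √(1 + r) := by
          gcongr
          rw [sqrt_le_left (by norm_num)]
          linarith
  · calc _ ≤ 6 * M / √(k * r) := norm_integral_half_one_le_of_one_le hγ hν hνM hν'M hr1.le
      _ = 6 * M * √(2 / k) / √(2 * r) := by
          have : √(2 / k) * √(k * r) = √(2 * r) := by
            rw [← sqrt_mul (by positivity)]; congr 1; field_simp
          rw [div_eq_div_iff (by positivity) (by positivity), ← this]
          ring
      _ ≤ 6 * M * √(2 / k) / √(1 + r) := by gcongr; linarith
      _ ≤ M * (1 + 6 * √(2 / k)) / √(1 + r) := by gcongr ?_ / _; nlinarith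

/-- Uniform oscillatory-integral estimate: for `ε ∈ C¹(ℝ)` vanishing for `|x| < 1/2`
and for `|x| ≥ 1`, with `‖ε‖_∞, ‖ε'‖_∞ ≤ M`, one has
`|∫ e^{-2πi(au + b|u|^γ)} ε(u) du| ≤ c (1 + |(a,b)|)^{-1/2}` with `c = c(γ, M)`. -/
theorem stmt5 (γ : ℝ) (hγ : 2 < γ) (M : ℝ) (hM : 0 < M) :
    ∃ c : ℝ, 0 < c ∧
      ∀ ε : ℝ → ℝ, ContDiff ℝ 1 ε →
        (∀ x : ℝ, |x| < 1/2 → ε x = 0) → (∀ x : ℝ, 1 ≤ |x| → ε x = 0) →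
        (∀ x, |ε x| ≤ M) → (∀ x, |deriv ε x| ≤ M) →
        ∀ a b : ℝ,
          ‖∫ u : ℝ, Complex.exp (-(2 * (π : ℂ) * Complex.I) *
              ((a * u + b * |u| ^ γ : ℝ) : ℂ)) * ((ε u : ℝ) : ℂ)‖ ≤
            c * (1 + Real.sqrt (a ^ 2 + b ^ 2)) ^ (-(1/2) : ℝ) := by
  refine ⟨2 * (M * (1 + 6 * √(2 / phaseConst γ))), by positivity, ?_⟩
  intro ε hε hsmall hlarge hεM hε'M a b
  have hcont : Continuous fun u : ℝ => Complex.exp (-(2 * (π : ℂ) * Complex.I) *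
      ((a * u + b * |u| ^ γ : ℝ) : ℂ)) * ((ε u : ℝ) : ℂ) := by
    have := hε.continuous
    have := continuous_abs.rpow_const (p := γ) fun _ => Or.inr (by linarith)
    fun_prop
  have habs : ∀ u ∈ uIcc (1 / 2 : ℝ) 1, |u| = u := fun u hu =>
    abs_of_nonneg (by linarith [(uIcc_of_le (by norm_num : (1 / 2 : ℝ) ≤ 1) ▸ hu).1])
  have hright : ∫ u in (1 / 2 : ℝ)..1, Complex.exp (-(2 * π * Complex.I) *
        (a * u + b * |u| ^ γ : ℝ)) * ε u =
      ∫ u in (1 / 2 : ℝ)..1, Complex.exp (-(2 * π * Complex.I) * (a * u + b * u ^ γ : ℝ)) * ε u :=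
    integral_congr fun u hu => by rw [habs u hu]
  have hleft : ∫ u in (1 / 2 : ℝ)..1, Complex.exp (-(2 * π * Complex.I) *
        (a * -u + b * |-u| ^ γ : ℝ)) * ε (-u) =
      ∫ u in (1 / 2 : ℝ)..1, Complex.exp (-(2 * π * Complex.I) *
        (-a * u + b * u ^ γ : ℝ)) * ε (-u) :=
    integral_congr fun u hu => by rw [abs_neg, habs u hu, show a * -u = -a * u by ring]
  have hright_le := norm_integral_half_one_le (a := a) (b := b) hγ.le hε hεM hε'M
  have hleft_le := norm_integral_half_one_le (ν := fun u => ε (-u)) (a := -a) (b := b) hγ.le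
    (hε.comp contDiff_neg) (fun u => hεM (-u))
    (fun u => by rw [deriv_comp_neg, abs_neg]; exact hε'M (-u))
  rw [neg_sq] at hleft_le
  rw [integral_eq_intervalIntegral_add_intervalIntegral_comp_neg (α := 1 / 2) (β := 1)
    (by norm_num) (by norm_num) hcont (fun x hx => by simp [hsmall x hx])
    (fun x hx => by simp [hlarge x hx]), hright, hleft]
  exact (norm_add_le _ _).trans (by linarith)
end

section
/- There exist absolute constants c₁, c₂ > 0 with the following property. Let φ: ℝ → ℝ be a smooth convex function with φ(0) = φ′(0) = 0 and φ″(0) > 0, suppose 0 < ‖φ‴‖_∞ < ∞, and set δ = φ″(0)/‖φ‴‖_∞. Then the function g(x) = x √(φ(x)/x²) (extended by g(0) = 0) is smooth and strictly increasing, hence invertible, on (−δ, δ); moreover g′(0) = √(φ″(0)/2) and c₁ √(φ″(0)) ≤ g′(x) ≤ c₂ √(φ″(0)) for all |x| < δ. -/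
open Real Set

open MeasureTheory intervalIntegral Filter
open scoped ContDiff Topology

open Real Set MeasureTheory intervalIntegral
open scoped ContDiff

namespace Stmt13Aux

variable {φ : ℝ → ℝ}

lemma smooth_iter (hφ : ContDiff ℝ ∞ φ) (n : ℕ) : ContDiff ℝ ∞ (iteratedDeriv n φ) := by
  rw [iteratedDeriv_eq_iterate]; exact hφ.iterate_deriv n

lemma cont_iter (hφ : ContDiff ℝ ∞ φ) (n : ℕ) : Continuous (iteratedDeriv n φ) :=
  (smooth_iter hφ n).continuous

lemma hasDerivAt_iter (hφ : ContDiff ℝ ∞ φ) (n : ℕ) (y : ℝ) :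
    HasDerivAt (iteratedDeriv n φ) (iteratedDeriv (n + 1) φ y) y := by
  rw [iteratedDeriv_succ]
  exact ((smooth_iter hφ n).differentiable (by simp) y).hasDerivAt

lemma deriv2_bound (hφ : ContDiff ℝ ∞ φ) {M : ℝ}
    (hb : ∀ y, |iteratedDeriv 3 φ y| ≤ M) (x : ℝ) :
    |iteratedDeriv 2 φ x - iteratedDeriv 2 φ 0| ≤ M * |x| := by
  have h := Convex.norm_image_sub_le_of_norm_deriv_le (f := iteratedDeriv 2 φ)
    (s := univ) (C := M)
    (fun y _ => (hasDerivAt_iter hφ 2 y).differentiableAt)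
    (fun y _ => by
      rw [Real.norm_eq_abs, ← iteratedDeriv_succ]
      exact hb y)
    convex_univ (mem_univ 0) (mem_univ x)
  simpa [Real.norm_eq_abs] using h

lemma aux_ftc (hφ : ContDiff ℝ ∞ φ) (n : ℕ) (x : ℝ) :
    (∫ t in (0:ℝ)..1, iteratedDeriv (n + 1) φ (t * x)) * x
      = iteratedDeriv n φ x - iteratedDeriv n φ 0 := by
  have h : ∀ t ∈ uIcc (0:ℝ) 1,
      HasDerivAt (fun t => iteratedDeriv n φ (t * x)) (iteratedDeriv (n + 1) φ (t * x) * x) t := by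
    intro t _
    have := (hasDerivAt_iter hφ n (t * x)).comp t ((hasDerivAt_id t).mul_const x)
    simpa [Function.comp_def, one_mul] using this
  have hint : IntervalIntegrable (fun t => iteratedDeriv (n + 1) φ (t * x) * x) volume 0 1 :=
    (((cont_iter hφ (n + 1)).comp (continuous_id.mul continuous_const)).mul
      continuous_const).intervalIntegrable _ _
  have := intervalIntegral.integral_eq_sub_of_hasDerivAt h hint
  simpa [intervalIntegral.integral_mul_const] using this

lemma aux_parts (hφ : ContDiff ℝ ∞ φ) (h0' : deriv φ 0 = 0) (x : ℝ) :
    (∫ t in (0:ℝ)..1, (1 - t) * iteratedDeriv 2 φ (t * x)) * x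
      = ∫ t in (0:ℝ)..1, deriv φ (t * x) := by
  have hvc : Continuous fun t : ℝ => deriv φ (t * x) :=
    (hφ.continuous_deriv (by exact_mod_cast le_top)).comp (continuous_id.mul continuous_const)
  have h := integral_mul_deriv_eq_deriv_mul_of_hasDerivAt (a := (0:ℝ)) (b := 1)
    (u := fun t => 1 - t) (v := fun t => deriv φ (t * x))
    (u' := fun _ => (-1 : ℝ)) (v' := fun t => iteratedDeriv 2 φ (t * x) * x)
    (continuous_const.sub continuous_id).continuousOn hvc.continuousOn
    (fun t _ => by simpa using ((hasDerivAt_id t).const_sub 1))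
    (fun t _ => by
      have h2 : HasDerivAt (deriv φ) (iteratedDeriv 2 φ (t * x)) (t * x) := by
        have := hasDerivAt_iter hφ 1 (t * x)
        rwa [iteratedDeriv_one] at this
      simpa [Function.comp_def] using h2.comp t ((hasDerivAt_id t).mul_const x))
    (intervalIntegrable_const)
    ((((cont_iter hφ 2).comp (continuous_id.mul continuous_const)).mul
      continuous_const).intervalIntegrable _ _)
  -- h : ∫ (1-t) * (φ''(tx)*x) = (1-1)*v 1 - (1-0)*v 0 - ∫ (-1) * v t
  have h2 : ∫ t in (0:ℝ)..1, (1 - t) * (iteratedDeriv 2 φ (t * x) * x)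
      = ∫ t in (0:ℝ)..1, deriv φ (t * x) := by
    rw [h]
    simp [h0', intervalIntegral.integral_neg]
  rw [← h2]
  rw [← intervalIntegral.integral_mul_const]
  congr 1; funext t; ring

lemma aux_identity (hφ : ContDiff ℝ ∞ φ) (h0 : φ 0 = 0) (h0' : deriv φ 0 = 0) (x : ℝ) :
    x ^ 2 * (∫ t in (0:ℝ)..1, (1 - t) * iteratedDeriv 2 φ (t * x)) = φ x := by
  have h1 := aux_ftc hφ 0 x
  simp only [iteratedDeriv_one, iteratedDeriv_zero, h0, sub_zero, zero_add] at h1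
  have h2 := aux_parts hφ h0' x
  calc x ^ 2 * (∫ t in (0:ℝ)..1, (1 - t) * iteratedDeriv 2 φ (t * x))
      = ((∫ t in (0:ℝ)..1, (1 - t) * iteratedDeriv 2 φ (t * x)) * x) * x := by ring
    _ = (∫ t in (0:ℝ)..1, deriv φ (t * x)) * x := by rw [h2]
    _ = φ x := h1

lemma aux_psi_est (hφ : ContDiff ℝ ∞ φ) {M : ℝ}
    (hb : ∀ y, |iteratedDeriv 3 φ y| ≤ M) (x : ℝ) :
    |(∫ t in (0:ℝ)..1, (1 - t) * iteratedDeriv 2 φ (t * x)) - iteratedDeriv 2 φ 0 / 2|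
      ≤ M * |x| / 6 := by
  set A := iteratedDeriv 2 φ 0 with hA
  have hM0 : 0 ≤ M := le_trans (abs_nonneg _) (hb 0)
  have hc2 : Continuous (iteratedDeriv 2 φ) := cont_iter hφ 2
  have hA2 : (∫ t in (0:ℝ)..1, (1 - t) * A) = A / 2 := by
    have e : (∫ t in (0:ℝ)..1, (1 - t) * A) = ∫ t in (0:ℝ)..1, (A - t * A) :=
      intervalIntegral.integral_congr fun t _ => by ring
    rw [e, intervalIntegral.integral_sub intervalIntegrable_const
      ((by fun_prop : Continuous fun t : ℝ => t * A).intervalIntegrable _ _),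
      intervalIntegral.integral_const, intervalIntegral.integral_mul_const, integral_id]
    norm_num; ring
  have hsub : (∫ t in (0:ℝ)..1, (1 - t) * iteratedDeriv 2 φ (t * x)) - A / 2
      = ∫ t in (0:ℝ)..1, ((1 - t) * iteratedDeriv 2 φ (t * x) - (1 - t) * A) := by
    rw [intervalIntegral.integral_sub
      ((by fun_prop : Continuous fun t : ℝ => (1 - t) * iteratedDeriv 2 φ (t * x)).intervalIntegrable _ _)
      ((by fun_prop : Continuous fun t : ℝ => (1 - t) * A).intervalIntegrable _ _), hA2]
  have hbd := intervalIntegral.norm_integral_le_abs_of_norm_le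
    (f := fun t => (1 - t) * iteratedDeriv 2 φ (t * x) - (1 - t) * A)
    (g := fun t => (1 - t) * t * (M * |x|)) (μ := volume) (a := 0) (b := 1)
    ((ae_restrict_iff' measurableSet_uIoc).mpr (ae_of_all _ fun t ht => by
      rw [Set.uIoc_of_le (by norm_num : (0:ℝ) ≤ 1)] at ht
      have h1t : (0:ℝ) ≤ 1 - t := by linarith [ht.2]
      have h2 := deriv2_bound hφ hb (t * x)
      calc ‖(1 - t) * iteratedDeriv 2 φ (t * x) - (1 - t) * A‖
          = (1 - t) * |iteratedDeriv 2 φ (t * x) - A| := by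
            rw [← mul_sub, Real.norm_eq_abs, abs_mul, abs_of_nonneg h1t]
        _ ≤ (1 - t) * (M * |t * x|) := mul_le_mul_of_nonneg_left h2 h1t
        _ = (1 - t) * t * (M * |x|) := by
            rw [abs_mul, abs_of_pos ht.1]; ring))
    ((by fun_prop : Continuous fun t : ℝ => (1 - t) * t * (M * |x|)).intervalIntegrable _ _)
  have hval : (∫ t in (0:ℝ)..1, (1 - t) * t * (M * |x|)) = M * |x| / 6 := by
    have e : (∫ t in (0:ℝ)..1, (1 - t) * t * (M * |x|))
        = ∫ t in (0:ℝ)..1, (t - t ^ 2) * (M * |x|) :=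
      intervalIntegral.integral_congr fun t _ => by ring
    rw [e, intervalIntegral.integral_mul_const,
      intervalIntegral.integral_sub
        ((by fun_prop : Continuous fun t : ℝ => t).intervalIntegrable _ _)
        ((by fun_prop : Continuous fun t : ℝ => t ^ 2).intervalIntegrable _ _),
      integral_id, integral_pow]
    norm_num; ring
  rw [hsub]
  calc |∫ t in (0:ℝ)..1, ((1 - t) * iteratedDeriv 2 φ (t * x) - (1 - t) * A)|
      ≤ |∫ t in (0:ℝ)..1, (1 - t) * t * (M * |x|)| := hbd
    _ = M * |x| / 6 := by rw [hval, abs_of_nonneg (by positivity)]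

lemma aux_chi_est (hφ : ContDiff ℝ ∞ φ) {M : ℝ}
    (hb : ∀ y, |iteratedDeriv 3 φ y| ≤ M) (x : ℝ) :
    |(∫ t in (0:ℝ)..1, iteratedDeriv 2 φ (t * x)) - iteratedDeriv 2 φ 0|
      ≤ M * |x| / 2 := by
  set A := iteratedDeriv 2 φ 0 with hA
  have hM0 : 0 ≤ M := le_trans (abs_nonneg _) (hb 0)
  have hc2 : Continuous (iteratedDeriv 2 φ) := cont_iter hφ 2
  have hsub : (∫ t in (0:ℝ)..1, iteratedDeriv 2 φ (t * x)) - A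
      = ∫ t in (0:ℝ)..1, (iteratedDeriv 2 φ (t * x) - A) := by
    rw [intervalIntegral.integral_sub
      ((by fun_prop : Continuous fun t : ℝ => iteratedDeriv 2 φ (t * x)).intervalIntegrable _ _)
      intervalIntegrable_const, intervalIntegral.integral_const]
    simp
  have hbd := intervalIntegral.norm_integral_le_abs_of_norm_le
    (f := fun t => iteratedDeriv 2 φ (t * x) - A)
    (g := fun t => t * (M * |x|)) (μ := volume) (a := 0) (b := 1)
    ((ae_restrict_iff' measurableSet_uIoc).mpr (ae_of_all _ fun t ht => by
      rw [Set.uIoc_of_le (by norm_num : (0:ℝ) ≤ 1)] at ht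
      have h2 := deriv2_bound hφ hb (t * x)
      calc ‖iteratedDeriv 2 φ (t * x) - A‖ = |iteratedDeriv 2 φ (t * x) - A| := rfl
        _ ≤ M * |t * x| := h2
        _ = t * (M * |x|) := by rw [abs_mul, abs_of_pos ht.1]; ring))
    ((by fun_prop : Continuous fun t : ℝ => t * (M * |x|)).intervalIntegrable _ _)
  have hval : (∫ t in (0:ℝ)..1, t * (M * |x|)) = M * |x| / 2 := by
    rw [intervalIntegral.integral_mul_const, integral_id]
    norm_num; ring
  rw [hsub]
  calc |∫ t in (0:ℝ)..1, (iteratedDeriv 2 φ (t * x) - A)|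
      ≤ |∫ t in (0:ℝ)..1, t * (M * |x|)| := hbd
    _ = M * |x| / 2 := by rw [hval, abs_of_nonneg (by positivity)]

lemma dslope2_eq (h0 : φ 0 = 0) (h0' : deriv φ 0 = 0) {y : ℝ} (hy : y ≠ 0) :
    dslope (dslope φ 0) 0 y = φ y / y ^ 2 := by
  rw [dslope_of_ne _ hy, slope_def_field, dslope_of_ne _ hy, slope_def_field, dslope_same, h0, h0']
  rw [sub_zero, sub_zero, sub_zero, div_div, ← pow_two]

lemma param_hasDerivAt (p h : ℝ → ℝ) (hp : Continuous p) (hh : ContDiff ℝ ∞ h) (x₀ : ℝ) :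
    HasDerivAt (fun x => ∫ t in (0:ℝ)..1, p t * h (t * x))
      (∫ t in (0:ℝ)..1, p t * t * deriv h (t * x₀)) x₀ := by
  have hc : Continuous h := hh.continuous
  have hd : Continuous (deriv h) := hh.continuous_deriv (by simp)
  obtain ⟨C, hC⟩ : ∃ C, ∀ t ∈ Icc (0:ℝ) 1, ∀ x ∈ Metric.closedBall x₀ 1,
      ‖p t * t * deriv h (t * x)‖ ≤ C := by
    obtain ⟨C, hC⟩ := (isCompact_Icc.prod (isCompact_closedBall x₀ 1)).exists_bound_of_continuousOn
      (f := fun q : ℝ × ℝ => p q.1 * q.1 * deriv h (q.1 * q.2))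
      ((by fun_prop : Continuous fun q : ℝ × ℝ => p q.1 * q.1 * deriv h (q.1 * q.2)).continuousOn)
    exact ⟨C, fun t ht x hx => hC (t, x) ⟨ht, hx⟩⟩
  have := intervalIntegral.hasDerivAt_integral_of_dominated_loc_of_deriv_le (μ := volume)
    (a := 0) (b := 1)
    (F := fun x t => p t * h (t * x)) (F' := fun x t => p t * t * deriv h (t * x)) (x₀ := x₀)
    (bound := fun _ => C) (s := Metric.ball x₀ 1) (Metric.ball_mem_nhds x₀ one_pos)
    (Eventually.of_forall fun x =>
      (by fun_prop : Continuous fun t => p t * h (t * x)).aestronglyMeasurable)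
    ((by fun_prop : Continuous fun t => p t * h (t * x₀)).intervalIntegrable _ _)
    ((by fun_prop : Continuous fun t => p t * t * deriv h (t * x₀)).aestronglyMeasurable)
    (ae_of_all _ fun t ht x hx => by
      rw [Set.uIoc_of_le (by norm_num : (0:ℝ) ≤ 1)] at ht
      exact hC t ⟨ht.1.le, ht.2⟩ x (Metric.ball_subset_closedBall hx))
    intervalIntegrable_const
    (ae_of_all _ fun t _ x _ => by
      have h1 : HasDerivAt (fun y => t * y) t x := by
        simpa using (hasDerivAt_id x).const_mul t
      have h2 := ((hh.differentiable (by simp) (t * x)).hasDerivAt).comp x h1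
      exact (h2.const_mul (p t)).congr_deriv (by ring))
  exact this.2

lemma param_smooth (n : ℕ) : ∀ (p h : ℝ → ℝ), Continuous p → ContDiff ℝ ∞ h →
    ContDiff ℝ n (fun x => ∫ t in (0:ℝ)..1, p t * h (t * x)) := by
  induction n with
  | zero =>
    intro p h hp hh
    rw [Nat.cast_zero, contDiff_zero]
    exact continuous_iff_continuousAt.2 fun x =>
      (param_hasDerivAt p h hp hh x).continuousAt
  | succ n ih =>
    intro p h hp hh
    rw [Nat.cast_succ, contDiff_succ_iff_deriv]
    refine ⟨fun x => (param_hasDerivAt p h hp hh x).differentiableAt, by simp, ?_⟩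
    have e : deriv (fun x => ∫ t in (0:ℝ)..1, p t * h (t * x))
        = fun x => ∫ t in (0:ℝ)..1, (p t * t) * deriv h (t * x) :=
      funext fun x => (param_hasDerivAt p h hp hh x).deriv
    rw [e]
    exact ih _ _ (hp.mul continuous_id) (contDiff_infty_iff_deriv.1 hh).2

lemma param_smooth_infty (p h : ℝ → ℝ) (hp : Continuous p) (hh : ContDiff ℝ ∞ h) :
    ContDiff ℝ ∞ (fun x => ∫ t in (0:ℝ)..1, p t * h (t * x)) :=
  contDiff_infty.2 fun n => param_smooth n p h hp hh

end Stmt13Aux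


/-- Change of variables for stationary phase: there are absolute constants
`c₁, c₂ > 0` such that for any smooth convex `φ` with `φ(0) = φ'(0) = 0`,
`φ''(0) > 0` and `0 < ‖φ‴‖_∞ < ∞` (`M` being the exact sup norm of `φ‴`), setting
`δ = φ''(0)/‖φ‴‖_∞`, the function `g(x) = x√(φ(x)/x²)` is smooth and strictly
increasing (hence invertible) on `(-δ,δ)`, `g'(0) = √(φ''(0)/2)`, and
`c₁√(φ''(0)) ≤ g'(x) ≤ c₂√(φ''(0))` for `|x| < δ`. -/
theorem stmt13 :
    ∃ c₁ c₂ : ℝ, 0 < c₁ ∧ 0 < c₂ ∧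
      ∀ (φ : ℝ → ℝ) (M : ℝ),
        ContDiff ℝ (⊤ : ℕ∞) φ → ConvexOn ℝ Set.univ φ →
        φ 0 = 0 → deriv φ 0 = 0 → 0 < iteratedDeriv 2 φ 0 →
        IsLUB (Set.range fun x => |iteratedDeriv 3 φ x|) M → 0 < M →
        ∀ (δ : ℝ) (g : ℝ → ℝ),
          δ = iteratedDeriv 2 φ 0 / M →
          g = (fun x : ℝ => x * Real.sqrt (φ x / x ^ 2)) →
          ContDiffOn ℝ (⊤ : ℕ∞) g (Set.Ioo (-δ) δ) ∧
          StrictMonoOn g (Set.Ioo (-δ) δ) ∧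
          deriv g 0 = Real.sqrt (iteratedDeriv 2 φ 0 / 2) ∧
          ∀ x ∈ Set.Ioo (-δ) δ,
            c₁ * Real.sqrt (iteratedDeriv 2 φ 0) ≤ deriv g x ∧
            deriv g x ≤ c₂ * Real.sqrt (iteratedDeriv 2 φ 0) := by
  refine ⟨1/4, 2, by norm_num, by norm_num, ?_⟩
  intro φ M hφ hconv h0 h0' hA hM hMpos δ g hδ hg
  have hphi_inf : ContDiff ℝ ∞ φ := hφ.of_le (by simp)
  set A := iteratedDeriv 2 φ 0 with hAdef
  have hb : ∀ y, |iteratedDeriv 3 φ y| ≤ M := fun y => hM.1 ⟨y, rfl⟩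
  set ψ := dslope (dslope φ 0) 0 with hψdef
  have hψana : ∀ x, ContDiffAt ℝ ∞ ψ x := by
    have hsm : ContDiff ℝ ∞ (fun x => ∫ t in (0:ℝ)..1, (1 - t) * iteratedDeriv 2 φ (t * x)) :=
      Stmt13Aux.param_smooth_infty _ _ (by fun_prop) (Stmt13Aux.smooth_iter hphi_inf 2)
    have hd1 : dslope φ 0 = fun y => y * ∫ t in (0:ℝ)..1, (1 - t) * iteratedDeriv 2 φ (t * y) := by
      funext y
      rcases eq_or_ne y 0 with rfl | hy
      · rw [dslope_same, h0', zero_mul]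
      · rw [dslope_of_ne _ hy, slope_def_field, h0, sub_zero, sub_zero,
          ← Stmt13Aux.aux_identity hphi_inf h0 h0' y]
        field_simp
    have key : ψ = fun x => ∫ t in (0:ℝ)..1, (1 - t) * iteratedDeriv 2 φ (t * x) := by
      funext y
      rw [hψdef, hd1]
      rcases eq_or_ne y 0 with rfl | hy
      · rw [dslope_same]
        have : HasDerivAt (fun y => y * ∫ t in (0:ℝ)..1, (1 - t) * iteratedDeriv 2 φ (t * y))
            (1 * (∫ t in (0:ℝ)..1, (1 - t) * iteratedDeriv 2 φ (t * 0)) + 0 * deriv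
              (fun x => ∫ t in (0:ℝ)..1, (1 - t) * iteratedDeriv 2 φ (t * x)) 0) 0 :=
          (hasDerivAt_id' (x := (0:ℝ))).mul (hsm.differentiable (by simp) 0).hasDerivAt
        rw [this.deriv]
        simp
      · rw [dslope_of_ne _ hy, slope_def_field]
        field_simp
        ring
    intro x
    rw [key]
    exact hsm.contDiffAt
  have hψeq : ∀ y : ℝ, y ≠ 0 → ψ y = φ y / y ^ 2 := fun y hy => Stmt13Aux.dslope2_eq h0 h0' hy
  set ψI : ℝ → ℝ := fun x => ∫ t in (0:ℝ)..1, (1 - t) * iteratedDeriv 2 φ (t * x) with hψIdef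
  have hId : ∀ x : ℝ, x ^ 2 * ψI x = φ x := Stmt13Aux.aux_identity hphi_inf h0 h0'
  have hψIest : ∀ x : ℝ, |ψI x - A / 2| ≤ M * |x| / 6 := Stmt13Aux.aux_psi_est hphi_inf hb
  have hψeqI : ∀ y : ℝ, y ≠ 0 → ψ y = ψI y := by
    intro y hy
    rw [hψeq y hy, ← hId y]
    field_simp
  have hψ0 : ψ 0 = A / 2 := by
    have hcont : Tendsto ψ (𝓝[≠] (0:ℝ)) (𝓝 (ψ 0)) :=
      ((hψana 0).continuousAt.tendsto).mono_left nhdsWithin_le_nhds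
    have h1 : Tendsto (fun x : ℝ => ψ x - A / 2) (𝓝[≠] (0:ℝ)) (𝓝 0) := by
      apply squeeze_zero_norm' (a := fun x : ℝ => M * |x| / 6) ?_ ?_
      · filter_upwards [self_mem_nhdsWithin] with y hy
        rw [Real.norm_eq_abs, hψeqI y hy]
        exact hψIest y
      · have h2 : Tendsto (fun x : ℝ => M * |x| / 6) (𝓝 (0:ℝ)) (𝓝 (M * |(0:ℝ)| / 6)) :=
          (Continuous.tendsto (by fun_prop) 0)
        simp only [abs_zero, mul_zero, zero_div] at h2
        exact h2.mono_left nhdsWithin_le_nhds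
    have hlim : Tendsto ψ (𝓝[≠] (0:ℝ)) (𝓝 (A / 2)) := by
      have := h1.add (tendsto_const_nhds (x := A / 2) (f := 𝓝[≠] (0:ℝ)))
      simpa using this
    exact tendsto_nhds_unique hcont hlim
  have hψest : ∀ x : ℝ, |ψ x - A / 2| ≤ M * |x| / 6 := by
    intro x
    rcases eq_or_ne x 0 with rfl | hx
    · simp [hψ0]
    · rw [hψeqI x hx]; exact hψIest x
  have hδpos : 0 < δ := by rw [hδ]; positivity
  have hMx : ∀ x ∈ Ioo (-δ) δ, M * |x| ≤ A := by
    intro x hx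
    have h1 : |x| < δ := abs_lt.2 ⟨hx.1, hx.2⟩
    have h2 : M * δ = A := by rw [hδ]; field_simp
    nlinarith
  have hψlb : ∀ x ∈ Ioo (-δ) δ, A / 3 ≤ ψ x := by
    intro x hx
    have h1 := (abs_le.1 (hψest x)).1
    have h2 := hMx x hx
    linarith
  have hψub : ∀ x ∈ Ioo (-δ) δ, ψ x ≤ A := by
    intro x hx
    have h1 := (abs_le.1 (hψest x)).2
    have h2 := hMx x hx
    linarith
  have hψpos : ∀ x ∈ Ioo (-δ) δ, 0 < ψ x := fun x hx =>
    lt_of_lt_of_le (by linarith : (0:ℝ) < A / 3) (hψlb x hx)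
  have hsq : ∀ y : ℝ, y ^ 2 * ψ y = φ y := by
    intro y
    rcases eq_or_ne y 0 with rfl | hy
    · simpa using h0.symm
    · rw [hψeqI y hy]; exact hId y
  have hgG : g = fun x => x * Real.sqrt (ψ x) := by
    funext x
    rw [hg]
    rcases eq_or_ne x 0 with rfl | hx
    · simp
    · rw [hψeq x hx]
  have hGsm : ∀ x ∈ Ioo (-δ) δ, ContDiffAt ℝ (⊤ : ℕ∞) (fun y => y * Real.sqrt (ψ y)) x := by
    intro x hx
    exact contDiffAt_id.mul
      ((contDiffAt_sqrt (ne_of_gt (hψpos x hx))).comp x (hψana x))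
  have hcdOn : ContDiffOn ℝ (⊤ : ℕ∞) g (Ioo (-δ) δ) := by
    rw [hgG]; exact fun x hx => (hGsm x hx).contDiffWithinAt
  have hψ0ne : ψ 0 ≠ 0 := by rw [hψ0]; positivity
  have hψd0 : HasDerivAt ψ (deriv ψ 0) 0 :=
    (((hψana 0).of_le (by simp) : ContDiffAt ℝ 1 ψ 0).differentiableAt one_ne_zero).hasDerivAt
  have hg0 : deriv g 0 = Real.sqrt (A / 2) := by
    rw [hgG]
    have hs : HasDerivAt (fun y => Real.sqrt (ψ y)) (1 / (2 * Real.sqrt (ψ 0)) * deriv ψ 0) 0 :=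
      (Real.hasDerivAt_sqrt hψ0ne).comp 0 hψd0
    have h1 : deriv (fun y => y * Real.sqrt (ψ y)) 0
        = 1 * Real.sqrt (ψ 0) + 0 * (1 / (2 * Real.sqrt (ψ 0)) * deriv ψ 0) :=
      HasDerivAt.deriv ((hasDerivAt_id' (x := 0)).mul hs)
    rw [h1, hψ0]; ring
  set χ : ℝ → ℝ := fun x => ∫ t in (0:ℝ)..1, iteratedDeriv 2 φ (t * x) with hχdef
  have hχ : ∀ x : ℝ, χ x * x = deriv φ x := by
    intro x
    have h1 := Stmt13Aux.aux_ftc hphi_inf 1 x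
    simp only [iteratedDeriv_one] at h1
    rw [h0', sub_zero] at h1
    exact h1
  have hχest : ∀ x : ℝ, |χ x - A| ≤ M * |x| / 2 := Stmt13Aux.aux_chi_est hphi_inf hb
  have hsqrtA : (0:ℝ) < Real.sqrt A := Real.sqrt_pos.2 hA
  have hmulself : Real.sqrt A * Real.sqrt A = A := Real.mul_self_sqrt hA.le
  have hbounds : ∀ x ∈ Ioo (-δ) δ,
      1/4 * Real.sqrt A ≤ deriv g x ∧ deriv g x ≤ 2 * Real.sqrt A := by
    intro x hx
    rcases eq_or_ne x 0 with rfl | hxne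
    · rw [hg0]
      constructor
      · have h1 : Real.sqrt (A/16) ≤ Real.sqrt (A/2) := Real.sqrt_le_sqrt (by linarith)
        have h2 : Real.sqrt (A/16) = Real.sqrt A / 4 := by
          rw [show A/16 = (Real.sqrt A / 4)^2 by rw [div_pow, Real.sq_sqrt hA.le]; norm_num,
            Real.sqrt_sq (by positivity)]
        linarith
      · have h1 : Real.sqrt (A/2) ≤ Real.sqrt A := Real.sqrt_le_sqrt (by linarith)
        linarith
    · have hψx := hψpos x hx
      set s := Real.sqrt (ψ x) with hsdef
      have hspos : 0 < s := Real.sqrt_pos.2 hψx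
      have hsup : s ≤ Real.sqrt A := Real.sqrt_le_sqrt (hψub x hx)
      have hslb : Real.sqrt A / 2 ≤ s := by
        have h1 : Real.sqrt (A/4) ≤ s := Real.sqrt_le_sqrt (by linarith [hψlb x hx])
        have h2 : Real.sqrt (A/4) = Real.sqrt A / 2 := by
          rw [show A/4 = (Real.sqrt A / 2)^2 by rw [div_pow, Real.sq_sqrt hA.le]; norm_num,
            Real.sqrt_sq (by positivity)]
        linarith
      have hχb := abs_le.1 (hχest x)
      have hMxA := hMx x hx
      have hχlb : A/2 ≤ χ x := by linarith [hχb.1]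
      have hχub : χ x ≤ 3*A/2 := by linarith [hχb.2]
      have hD : HasDerivAt (fun y => y * Real.sqrt (ψ y))
          (deriv (fun y => y * Real.sqrt (ψ y)) x) x :=
        (((hGsm x hx).differentiableAt (by simp))).hasDerivAt
      set D := deriv (fun y => y * Real.sqrt (ψ y)) x with hDdef
      have hev : (fun y => (y * Real.sqrt (ψ y)) ^ 2) =ᶠ[𝓝 x] φ := by
        filter_upwards [isOpen_Ioo.mem_nhds hx] with y hy
        rw [mul_pow, Real.sq_sqrt (hψpos y hy).le, hsq y]
      have e1 : deriv (fun y => (y * Real.sqrt (ψ y)) ^ 2) x = deriv φ x := hev.deriv_eq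
      have e2 := (hD.pow 2).deriv
      have key : 2 * (x * s) * D = χ x * x := by
        have h3 := e2.symm.trans e1
        rw [← hχ x] at h3
        simpa using h3
      have h4 : 2 * s * D = χ x := by
        have h3 : (2 * s * D) * x = χ x * x := by linear_combination key
        exact mul_right_cancel₀ hxne h3
      have hDg : deriv g x = D := by rw [hgG]
      rw [hDg]
      constructor
      · have h6 : Real.sqrt A * s ≤ Real.sqrt A * Real.sqrt A :=
          mul_le_mul_of_nonneg_left hsup (Real.sqrt_nonneg A)
        rw [hmulself] at h6
        nlinarith
      · have h7 : Real.sqrt A * (Real.sqrt A / 2) ≤ Real.sqrt A * s :=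
          mul_le_mul_of_nonneg_left hslb (Real.sqrt_nonneg A)
        nlinarith
  have hmono : StrictMonoOn g (Ioo (-δ) δ) := by
    apply strictMonoOn_of_deriv_pos (convex_Ioo _ _) hcdOn.continuousOn
    intro x hx
    rw [interior_Ioo] at hx
    have := (hbounds x hx).1
    nlinarith
  exact ⟨hcdOn, hmono, hg0, fun x hx => hbounds x hx⟩
end
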